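/- arXiv:1510.03454 — 6 statements merged into one kernel-verified Lean document; each statement's English description precedes it below -/
import Mathlib

section
/- Let T be the map on pairs (ρ₁, ρ₂) of 2×2 complex matrices defined by T(ρ₁, ρ₂) = ((ρ₁+ρ₂)/2, (ρ₁+ρ₂)/2) (the open quantum random walk induced by the order-2 quantum transition matrix all of whose entries are I/√2). Then there exist vector states ρ = (ρ₁, ρ₂) and η = (η₁, η₂) such that for every r ≥ 1, ‖T^r ρ − T^r η‖₁ = 1/4. In particular sup over pairs of vector states of ‖T^r ρ − T^r η‖₁ does not tend to 0 as r → ∞, i.e. the homogeneous quantum Markov chain {T^r} is not weakly ergodic, even though all components of T^r(ρ) are equal for every ρ (ergodicity in the columns-equal sense). -/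
open Matrix ComplexOrder

/-- tr|M| where |M| = √(M*M). -/
noncomputable def absTrace (M : Matrix (Fin 2) (Fin 2) ℂ) : ℝ :=
  (Matrix.trace (open scoped MatrixOrder in CFC.sqrt (Mᴴ * M))).re

/-- ‖(X₁,X₂)‖₁ = (1/4)(tr|X₁| + tr|X₂|). -/
noncomputable def normOne (X : Matrix (Fin 2) (Fin 2) ℂ × Matrix (Fin 2) (Fin 2) ℂ) : ℝ :=
  (1 / 4) * (absTrace X.1 + absTrace X.2)

/-- A vector state: a pair of positive semidefinite 2×2 matrices of total trace 1. -/
def IsVectorState (ρ : Matrix (Fin 2) (Fin 2) ℂ × Matrix (Fin 2) (Fin 2) ℂ) : Prop :=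
  ρ.1.PosSemidef ∧ ρ.2.PosSemidef ∧ Matrix.trace ρ.1 + Matrix.trace ρ.2 = 1

/-
T is idempotent, so `T^r = T` for `r ≥ 1`, and both components of `T^r σ` are the average
`(σ₁ + σ₂)/2`. This average only sees `σ₁ + σ₂`, so the pure state `(diag(1,0), 0)` and the
maximally mixed state `(I/2, 0)` stay at distance `‖(D, D)‖₁ = 1/4` forever, where
`D = diag(1/4, -1/4)`. Hence the supremum is at least `1/4`; it is finite (and `sSup` is not
the junk value `0`) because `(tr|X|)² ≤ 2 tr(X*X)` in dimension 2, the Hilbert–Schmidt norm obeys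
the parallelogram law, and `tr(A²) = (tr A)² - 2 det A ≤ (tr A)²` for positive `A`.
-/

open scoped MatrixOrder

local notation "M₂" => Matrix (Fin 2) (Fin 2) ℂ

lemma absTrace_diagonal (d : Fin 2 → ℂ) : absTrace (diagonal d) = ‖d 0‖ + ‖d 1‖ := by
  have hsqrt : CFC.sqrt ((diagonal d)ᴴ * diagonal d) = diagonal fun i => (‖d i‖ : ℂ) := by
    refine CFC.sqrt_unique ?_ (PosSemidef.diagonal fun i => by simp).nonneg
    rw [diagonal_conjTranspose, diagonal_mul_diagonal, diagonal_mul_diagonal]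
    congr 1; ext i
    simp [← sq, Complex.conj_mul']
  rw [absTrace, hsqrt]
  simp [trace_diagonal, Fin.sum_univ_two]

lemma Matrix.IsHermitian.trace_re_sq_le {H : M₂} (hH : H.IsHermitian) :
    H.trace.re ^ 2 ≤ 2 * (H * H).trace.re := by
  have h10 : H 1 0 = star (H 0 1) := (hH.apply 1 0).symm
  have him : ∀ i, (H i i).im = 0 := fun i => by
    have := congrArg Complex.im (hH.apply i i)
    simp only [Complex.star_def, Complex.conj_im] at this
    linarith
  simp only [trace_fin_two, mul_apply, Fin.sum_univ_two, h10, Complex.add_re, Complex.mul_re,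
    Complex.star_def, Complex.conj_re, Complex.conj_im, him]
  nlinarith [sq_nonneg ((H 0 0).re - (H 1 1).re), sq_nonneg (H 0 1).re, sq_nonneg (H 0 1).im]

lemma absTrace_sq_le (M : M₂) :
    absTrace M ^ 2 ≤ 2 * (Mᴴ * M).trace.re := by
  have hQ : (CFC.sqrt (Mᴴ * M)).IsHermitian := (CFC.sqrt_nonneg _).posSemidef.1
  rw [← CFC.sqrt_mul_sqrt_self (Mᴴ * M) (posSemidef_conjTranspose_mul_self M).nonneg]
  exact hQ.trace_re_sq_le

lemma trace_conjTranspose_mul_self_sub_le {n : Type*} [Fintype n] (M N : Matrix n n ℂ) :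
    ((M - N)ᴴ * (M - N)).trace.re ≤ 2 * (Mᴴ * M).trace.re + 2 * (Nᴴ * N).trace.re := by
  have hpar : (M - N)ᴴ * (M - N) + (M + N)ᴴ * (M + N) = 2 • (Mᴴ * M) + 2 • (Nᴴ * N) := by
    simp only [conjTranspose_sub, conjTranspose_add]; noncomm_ring
  have hnn : 0 ≤ ((M + N)ᴴ * (M + N)).trace.re :=
    (Complex.nonneg_iff.mp (posSemidef_conjTranspose_mul_self _).trace_nonneg).1
  have := congrArg (fun X => X.trace.re) hpar
  simp only [trace_add, trace_smul, Complex.add_re, Complex.re_nsmul] at this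
  simp only [nsmul_eq_mul, Nat.cast_ofNat] at this
  linarith

lemma Matrix.PosSemidef.trace_conjTranspose_mul_self_le {A : M₂} (hA : A.PosSemidef) :
    (Aᴴ * A).trace.re ≤ A.trace.re ^ 2 := by
  have hdet := Complex.nonneg_iff.mp hA.det_nonneg
  have htr := Complex.nonneg_iff.mp hA.trace_nonneg
  have hid : (Aᴴ * A).trace = A.trace ^ 2 - 2 * A.det := by
    rw [hA.1.eq]
    simp only [trace_fin_two, det_fin_two, mul_apply, Fin.sum_univ_two]
    ring
  simp only [hid, Complex.sub_re, sq, Complex.mul_re, ← htr.2, ← hdet.2, Complex.re_ofNat,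
    Complex.im_ofNat]
  nlinarith [hdet.1]

lemma absTrace_sub_le_three {A B : M₂} (hA : A.PosSemidef) (hB : B.PosSemidef)
    (hAt : A.trace.re ∈ Set.Icc 0 1) (hBt : B.trace.re ∈ Set.Icc 0 1) : absTrace (A - B) ≤ 3 := by
  have hsq : absTrace (A - B) ^ 2 ≤ 4 * (A.trace.re ^ 2 + B.trace.re ^ 2) := by
    linarith [absTrace_sq_le (A - B), trace_conjTranspose_mul_self_sub_le A B,
      hA.trace_conjTranspose_mul_self_le, hB.trace_conjTranspose_mul_self_le]
  nlinarith [hAt.1, hAt.2, hBt.1, hBt.2]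

lemma IsVectorState.trace_re_mem_Icc {ρ : M₂ × M₂} (hρ : IsVectorState ρ) :
    ρ.1.trace.re ∈ Set.Icc 0 1 ∧ ρ.2.trace.re ∈ Set.Icc 0 1 := by
  obtain ⟨h₁, h₂, hsum⟩ := hρ
  have n₁ := (Complex.nonneg_iff.mp h₁.trace_nonneg).1
  have n₂ := (Complex.nonneg_iff.mp h₂.trace_nonneg).1
  have hre : ρ.1.trace.re + ρ.2.trace.re = 1 := by simpa using congrArg Complex.re hsum
  exact ⟨⟨n₁, by linarith⟩, ⟨n₂, by linarith⟩⟩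

lemma normOne_sub_le_two {ρ η : M₂ × M₂} (hρ : IsVectorState ρ) (hη : IsVectorState η) :
    normOne (ρ - η) ≤ 2 := by
  obtain ⟨hρ₁, hρ₂⟩ := hρ.trace_re_mem_Icc
  obtain ⟨hη₁, hη₂⟩ := hη.trace_re_mem_Icc
  have h₁ := absTrace_sub_le_three hρ.1 hη.1 hρ₁ hη₁
  have h₂ := absTrace_sub_le_three hρ.2.1 hη.2.1 hρ₂ hη₂
  simp only [normOne, Prod.fst_sub, Prod.snd_sub]
  linarith

section Averaging

variable {E : Type*} [AddCommGroup E] [Module ℂ E]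

noncomputable def averagePair (p : E × E) : E × E :=
  ((1 / 2 : ℂ) • (p.1 + p.2), (1 / 2 : ℂ) • (p.1 + p.2))

lemma averagePair_averagePair (p : E × E) : averagePair (averagePair p) = averagePair p := by
  simp only [averagePair, Prod.mk.injEq, and_self]
  module

lemma iterate_averagePair {r : ℕ} (hr : 1 ≤ r) (p : E × E) :
    averagePair^[r] p = averagePair p := by
  obtain ⟨k, rfl⟩ := Nat.exists_eq_add_of_le' hr
  rw [Function.iterate_succ_apply, Function.iterate_fixed (averagePair_averagePair p)]

end Averaging

lemma IsVectorState.averagePair {ρ : M₂ × M₂} (hρ : IsVectorState ρ) :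
    IsVectorState (averagePair ρ) := by
  obtain ⟨h₁, h₂, hsum⟩ := hρ
  have hpsd := (h₁.add h₂).smul (by norm_num [Complex.le_def] : (0 : ℂ) ≤ 1 / 2)
  refine ⟨hpsd, hpsd, ?_⟩
  simp only [_root_.averagePair, trace_smul, ← smul_add, trace_add, hsum]
  norm_num

lemma isVectorState_diagonal_zero {d : Fin 2 → ℂ} (hd : ∀ i, 0 ≤ d i) (hsum : d 0 + d 1 = 1) :
    IsVectorState (diagonal d, 0) :=
  ⟨PosSemidef.diagonal hd, PosSemidef.zero, by simp [trace_diagonal, hsum]⟩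

def pureState : M₂ × M₂ := (diagonal ![1, 0], 0)

noncomputable def mixedState : M₂ × M₂ := (diagonal ![1 / 2, 1 / 2], 0)

lemma isVectorState_pureState : IsVectorState pureState :=
  isVectorState_diagonal_zero (fun i => by fin_cases i <;> simp) (by simp)

lemma isVectorState_mixedState : IsVectorState mixedState :=
  isVectorState_diagonal_zero (fun i => by fin_cases i <;> norm_num [Complex.le_def]) (by norm_num)

lemma normOne_iterate_pureState_sub_mixedState {r : ℕ} (hr : 1 ≤ r) :
    normOne (averagePair^[r] pureState - averagePair^[r] mixedState) = 1 / 4 := by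
  have hdiff : (1 / 2 : ℂ) • (diagonal ![1, 0] + 0) - (1 / 2 : ℂ) • (diagonal ![1 / 2, 1 / 2] + 0) =
      (diagonal ![1 / 4, -1 / 4] : M₂) := by
    ext i j
    fin_cases i <;> fin_cases j <;> norm_num
  rw [iterate_averagePair hr, iterate_averagePair hr]
  simp only [normOne, averagePair, pureState, mixedState, Prod.fst_sub, Prod.snd_sub, hdiff,
    absTrace_diagonal]
  norm_num

lemma quarter_le_sSup_normOne_sub_iterate {r : ℕ} (hr : 1 ≤ r) :
    1 / 4 ≤ sSup {d : ℝ | ∃ ρ η, IsVectorState ρ ∧ IsVectorState η ∧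
      d = normOne (averagePair^[r] ρ - averagePair^[r] η)} := by
  refine le_csSup ⟨2, ?_⟩ ⟨_, _, isVectorState_pureState, isVectorState_mixedState, ?_⟩
  · rintro _ ⟨ρ, η, hρ, hη, rfl⟩
    rw [iterate_averagePair hr, iterate_averagePair hr]
    exact normOne_sub_le_two hρ.averagePair hη.averagePair
  · exact (normOne_iterate_pureState_sub_mixedState hr).symm

/-- for the OQRW T(ρ₁,ρ₂) = ((ρ₁+ρ₂)/2, (ρ₁+ρ₂)/2) there exist vector
states ρ, η with ‖T^r ρ − T^r η‖₁ = 1/4 for all r ≥ 1; hence the sup over pairs of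
vector states does not tend to 0 (no weak ergodicity), even though both components
of T^r σ coincide for every σ and r ≥ 1 (ergodicity in the columns-equal sense). -/
theorem maximally_mixed_QTM_not_weakly_ergodic
    (T : (Matrix (Fin 2) (Fin 2) ℂ × Matrix (Fin 2) (Fin 2) ℂ) →
         (Matrix (Fin 2) (Fin 2) ℂ × Matrix (Fin 2) (Fin 2) ℂ))
    (hT : ∀ p, T p = (((1 : ℂ) / 2) • (p.1 + p.2), ((1 : ℂ) / 2) • (p.1 + p.2))) :
    (∃ ρ η, IsVectorState ρ ∧ IsVectorState η ∧
      ∀ r : ℕ, 1 ≤ r → normOne (T^[r] ρ - T^[r] η) = 1 / 4) ∧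
    ¬ Filter.Tendsto
        (fun r : ℕ => sSup {d : ℝ | ∃ ρ η, IsVectorState ρ ∧ IsVectorState η ∧
            d = normOne (T^[r] ρ - T^[r] η)})
        Filter.atTop (nhds 0) ∧
    (∀ σ, ∀ r : ℕ, 1 ≤ r → (T^[r] σ).1 = (T^[r] σ).2) := by
  obtain rfl : T = averagePair := funext hT
  refine ⟨⟨pureState, mixedState, isVectorState_pureState, isVectorState_mixedState,
    fun r => normOne_iterate_pureState_sub_mixedState⟩, fun hlim => ?_,
    fun σ r hr => by rw [iterate_averagePair hr]; rfl⟩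
  obtain ⟨r, hsmall, hr⟩ :=
    ((hlim.eventually (gt_mem_nhds (by norm_num : (0 : ℝ) < 1 / 4))).and
      (Filter.eventually_ge_atTop 1)).exists
  exact (quarter_le_sSup_normOne_sub_iterate hr).not_gt hsmall
end

section
/- Let (B_i^j)_{i,j∈ℤ} define an OQRW on ℤ and let A ⊆ ℤ. Suppose (x_i)_{i∈ℤ} is a family of linear functionals on the k×k complex matrices such that: x_i(X) ≥ 0 whenever X is positive semidefinite; x_i(X) = tr(X) for every i ∈ A; and for every i ∉ A and every positive semidefinite X, x_i(X) = ∑_j x_j( B_i^j X (B_i^j)* ). Then x_i(ρ) ≥ h_i^A(ρ) for every i ∈ ℤ and every density matrix ρ. (Thus, since the hitting probabilities themselves satisfy this system, the vector (h_i^A) is the minimal nonnegative solution of it.) -/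
open Matrix ComplexOrder

/-- A first-passage path from `i` to the set `A ⊆ ℤ`: a finite sequence
i = x₀, x₁, …, x_r with r ≥ 1, x₀, …, x_{r−1} ∉ A and x_r ∈ A. -/
structure FPPath (A : Set ℤ) (i : ℤ) where
  r : ℕ
  x : ℕ → ℤ
  hr : 1 ≤ r
  hx0 : x 0 = i
  hmid : ∀ m, m < r → x m ∉ A
  hlast : x r ∈ A
  htail : ∀ m, r ≤ m → x m = x r

/-- The path operator C = B_{x_{r−1}}^{x_r} ⋯ B_{x₁}^{x₂} B_{x₀}^{x₁}. -/
noncomputable def pathOp {k : ℕ} (B : ℤ → ℤ → Matrix (Fin k) (Fin k) ℂ)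
    {A : Set ℤ} {i : ℤ} (p : FPPath A i) : Matrix (Fin k) (Fin k) ℂ :=
  (List.range p.r).foldl (fun M m => B (p.x m) (p.x (m + 1)) * M) 1

-- Hitting probability h_i^A(ρ): sum of tr(C ρ C*) over all first-passage paths, 1 on A.
open Classical in
noncomputable def hitProb {k : ℕ} (B : ℤ → ℤ → Matrix (Fin k) (Fin k) ℂ)
    (A : Set ℤ) (i : ℤ) (ρ : Matrix (Fin k) (Fin k) ℂ) : ℝ :=
  if i ∈ A then 1
  else ∑' p : FPPath A i, (Matrix.trace (pathOp B p * ρ * (pathOp B p)ᴴ)).re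

/-! For `i ∉ A` and positive semidefinite `X`, every finite family of first-passage paths from
`i` has total weight `∑ tr (C X C*)` at most `re (x i X)`, by induction on the length of the
longest path. Group the paths by their first step `j`. If `j ∉ A`, deleting the first step
turns them into first-passage paths from `j` with `X` replaced by `B_i^j X (B_i^j)*`, so the
induction hypothesis at `j` applies; if `j ∈ A`, only the one-step path remains, of weight
`tr (B_i^j X (B_i^j)*) = x j (B_i^j X (B_i^j)*)`. Summing over `j`, the recursion for `x i`
closes the induction. The hitting probability is the supremum of these finite sums. -/

namespace FPPath

variable {A : Set ℤ} {i j : ℤ}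

lemma ext {p q : FPPath A i} (hr : p.r = q.r) (hx : p.x = q.x) : p = q := by
  cases p; cases q; simp only at hr hx; subst hr hx; rfl

lemma one_lt_r (p : FPPath A i) (hj : p.x 1 ∉ A) : 1 < p.r := by
  by_contra h
  have hr : p.r = 1 := le_antisymm (not_lt.mp h) p.hr
  exact hj (hr ▸ p.hlast)

lemma r_eq_one (p : FPPath A i) (hj : p.x 1 ∈ A) : p.r = 1 := by
  by_contra h
  exact p.hmid 1 (lt_of_le_of_ne p.hr (Ne.symm h)) hj

def tail (p : FPPath A i) (hj : j ∉ A) (hp : p.x 1 = j) : FPPath A j where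
  r := p.r - 1
  x := fun m => p.x (m + 1)
  hr := by have := p.one_lt_r (hp ▸ hj); omega
  hx0 := hp
  hmid := fun m hm => p.hmid (m + 1) (by omega)
  hlast := by
    rw [Nat.sub_add_cancel p.hr]
    exact p.hlast
  htail := fun m hm => by
    rw [Nat.sub_add_cancel p.hr]
    exact p.htail (m + 1) (by omega)

lemma tail_inj {p q : FPPath A i} (hj : j ∉ A) (hp : p.x 1 = j) (hq : q.x 1 = j)
    (h : p.tail hj hp = q.tail hj hq) : p = q := by
  have hpr := p.one_lt_r (hp ▸ hj)
  have hqr := q.one_lt_r (hq ▸ hj)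
  have hr : p.r - 1 = q.r - 1 := congrArg FPPath.r h
  have hx : (fun m => p.x (m + 1)) = fun m => q.x (m + 1) := congrArg FPPath.x h
  refine ext (by omega) (funext fun m => ?_)
  cases m with
  | zero => rw [p.hx0, q.hx0]
  | succ m => exact congrFun hx m

def oneStep (hi : i ∉ A) (hj : j ∈ A) : FPPath A i where
  r := 1
  x := fun m => if m = 0 then i else j
  hr := le_rfl
  hx0 := if_pos rfl
  hmid := fun m hm => by simpa [Nat.lt_one_iff.mp hm] using hi
  hlast := by simpa using hj
  htail := fun m hm => by simp [Nat.one_le_iff_ne_zero.mp hm]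

lemma eq_oneStep (hi : i ∉ A) (hj : j ∈ A) (p : FPPath A i) (hp : p.x 1 = j) :
    p = oneStep hi hj := by
  have hr := p.r_eq_one (hp ▸ hj)
  refine ext hr (funext fun m => ?_)
  rcases Nat.eq_zero_or_pos m with rfl | hm
  · simpa [oneStep] using p.hx0
  · simp [oneStep, Nat.pos_iff_ne_zero.mp hm, ← hp, p.htail m (hr ▸ hm), hr]

end FPPath

section PathWeight

variable {k : ℕ} (B : ℤ → ℤ → Matrix (Fin k) (Fin k) ℂ) {A : Set ℤ} {i j : ℤ}

lemma pathOp_eq_pathOp_tail_mul (p : FPPath A i) (hj : j ∉ A) (hp : p.x 1 = j) :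
    pathOp B p = pathOp B (p.tail hj hp) * B i j := by
  obtain ⟨s, hs⟩ : ∃ s, p.r = s + 1 := ⟨p.r - 1, by have := p.hr; omega⟩
  unfold pathOp FPPath.tail
  simp only [hs, Nat.add_sub_cancel, List.range_succ_eq_map, List.foldl_cons,
    List.foldl_map, p.hx0, hp, Matrix.mul_one]
  let step := fun M m => B (p.x (m + 1)) (p.x (m + 1 + 1)) * M
  have hom := List.foldl_hom (· * B i j) (g₁ := step) (g₂ := step) (l := List.range s)
    (init := 1) fun M m => (Matrix.mul_assoc _ M _).symm
  simpa using hom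

lemma pathOp_oneStep (hi : i ∉ A) (hj : j ∈ A) :
    pathOp B (FPPath.oneStep hi hj) = B i j := by
  simp [pathOp, FPPath.oneStep]

noncomputable def pathWeight (p : FPPath A i) (X : Matrix (Fin k) (Fin k) ℂ) : ℝ :=
  (trace (pathOp B p * X * (pathOp B p)ᴴ)).re

lemma pathWeight_nonneg (p : FPPath A i) {X : Matrix (Fin k) (Fin k) ℂ} (hX : X.PosSemidef) :
    0 ≤ pathWeight B p X :=
  (Complex.nonneg_iff.mp (hX.mul_mul_conjTranspose_same _).trace_nonneg).1

lemma pathWeight_eq_pathWeight_tail (p : FPPath A i) (hj : j ∉ A) (hp : p.x 1 = j)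
    (X : Matrix (Fin k) (Fin k) ℂ) :
    pathWeight B p X = pathWeight B (p.tail hj hp) (B i j * X * (B i j)ᴴ) := by
  simp only [pathWeight, pathOp_eq_pathOp_tail_mul B p hj hp, conjTranspose_mul,
    Matrix.mul_assoc]

lemma pathWeight_oneStep (hi : i ∉ A) (hj : j ∈ A) (X : Matrix (Fin k) (Fin k) ℂ) :
    pathWeight B (FPPath.oneStep hi hj) X = (trace (B i j * X * (B i j)ᴴ)).re := by
  rw [pathWeight, pathOp_oneStep]

lemma sum_pathWeight_fiber_eq_sum_tail (hj : j ∉ A) (F : Finset (FPPath A i))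
    (X : Matrix (Fin k) (Fin k) ℂ) :
    ∃ G : Finset (FPPath A j), (∀ q ∈ G, ∃ p ∈ F, q.r = p.r - 1) ∧
      ∑ p ∈ F with p.x 1 = j, pathWeight B p X =
        ∑ q ∈ G, pathWeight B q (B i j * X * (B i j)ᴴ) := by
  set fiber := F.filter (fun p => p.x 1 = j)
  have hfiber : ∀ p ∈ fiber, p.x 1 = j := fun p hp => (Finset.mem_filter.mp hp).2
  let tail : fiber ↪ FPPath A j :=
    ⟨fun p => p.1.tail hj (hfiber p.1 p.2),
      fun p q h => Subtype.ext (FPPath.tail_inj hj _ _ h)⟩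
  refine ⟨fiber.attach.map tail, fun q hq => ?_, ?_⟩
  · obtain ⟨p, -, rfl⟩ := Finset.mem_map.mp hq
    exact ⟨p.1, Finset.mem_of_mem_filter _ p.2, rfl⟩
  · rw [Finset.sum_map, ← Finset.sum_attach]
    exact Finset.sum_congr rfl fun p _ => pathWeight_eq_pathWeight_tail B p.1 hj _ X

end PathWeight

section Minimality

variable {k : ℕ} {B : ℤ → ℤ → Matrix (Fin k) (Fin k) ℂ} {A : Set ℤ}
  {x : ℤ → (Matrix (Fin k) (Fin k) ℂ →ₗ[ℂ] ℂ)}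

lemma sum_pathWeight_fiber_le_of_mem
    (hA : ∀ i ∈ A, ∀ X : Matrix (Fin k) (Fin k) ℂ, x i X = Matrix.trace X)
    {i j : ℤ} (hi : i ∉ A) (hj : j ∈ A) (F : Finset (FPPath A i))
    {X : Matrix (Fin k) (Fin k) ℂ} (hX : X.PosSemidef) :
    ∑ p ∈ F with p.x 1 = j, pathWeight B p X ≤ (x j (B i j * X * (B i j)ᴴ)).re := by
  have hsub : F.filter (fun p => p.x 1 = j) ⊆ {FPPath.oneStep hi hj} := fun p hp =>
    Finset.mem_singleton.mpr (p.eq_oneStep hi hj (Finset.mem_filter.mp hp).2)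
  calc ∑ p ∈ F with p.x 1 = j, pathWeight B p X
      ≤ ∑ p ∈ {FPPath.oneStep hi hj}, pathWeight B p X :=
        Finset.sum_le_sum_of_subset_of_nonneg hsub fun p _ _ => pathWeight_nonneg B p hX
    _ = (x j (B i j * X * (B i j)ᴴ)).re := by
        rw [Finset.sum_singleton, pathWeight_oneStep, hA j hj]

lemma sum_pathWeight_le_of_r_le
    (hfin : ∀ i, {j : ℤ | B i j ≠ 0}.Finite)
    (hpos : ∀ i (X : Matrix (Fin k) (Fin k) ℂ), X.PosSemidef → 0 ≤ (x i X).re)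
    (hA : ∀ i ∈ A, ∀ X : Matrix (Fin k) (Fin k) ℂ, x i X = Matrix.trace X)
    (hrec : ∀ i ∉ A, ∀ X : Matrix (Fin k) (Fin k) ℂ, X.PosSemidef →
      x i X = ∑' j : ℤ, x j (B i j * X * (B i j)ᴴ))
    (n : ℕ) {i : ℤ} (hi : i ∉ A) {X : Matrix (Fin k) (Fin k) ℂ} (hX : X.PosSemidef)
    (F : Finset (FPPath A i)) (hF : ∀ p ∈ F, p.r ≤ n) :
    ∑ p ∈ F, pathWeight B p X ≤ (x i X).re := by
  induction n generalizing i X F with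
  | zero =>
    have hF0 : F = ∅ := Finset.eq_empty_of_forall_notMem fun p hp => by
      have := p.hr; have := hF p hp; omega
    simpa [hF0] using hpos i X hX
  | succ n ih =>
    classical
    set S := (hfin i).toFinset
    have hS : ∀ j ∉ S, x j (B i j * X * (B i j)ᴴ) = 0 := fun j hj => by
      simp [not_not.mp (mt (hfin i).mem_toFinset.mpr hj)]
    have hfiber : ∀ j, ∑ p ∈ F with p.x 1 = j, pathWeight B p X ≤
        (x j (B i j * X * (B i j)ᴴ)).re := fun j => by
      by_cases hj : j ∈ A
      · exact sum_pathWeight_fiber_le_of_mem hA hi hj F hX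
      · obtain ⟨G, hG, hsum⟩ := sum_pathWeight_fiber_eq_sum_tail B hj F X
        rw [hsum]
        refine ih hj (hX.mul_mul_conjTranspose_same _) G fun q hq => ?_
        obtain ⟨p, hp, hqp⟩ := hG q hq
        have := hF p hp
        omega
    calc ∑ p ∈ F, pathWeight B p X
        = ∑ j ∈ F.image (fun p => p.x 1) ∪ S, ∑ p ∈ F with p.x 1 = j, pathWeight B p X :=
          (Finset.sum_fiberwise_of_maps_to
            (fun p hp => Finset.mem_union_left _ (Finset.mem_image_of_mem _ hp)) _).symm
      _ ≤ ∑ j ∈ F.image (fun p => p.x 1) ∪ S, (x j (B i j * X * (B i j)ᴴ)).re :=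
          Finset.sum_le_sum fun j _ => hfiber j
      _ = ∑ j ∈ S, (x j (B i j * X * (B i j)ᴴ)).re :=
          (Finset.sum_subset Finset.subset_union_right fun j _ hj => by
            rw [hS j hj, Complex.zero_re]).symm
      _ = (x i X).re := by
          rw [hrec i hi X hX, tsum_eq_sum hS, Complex.re_sum]

end Minimality

theorem hitProb_minimal_general (k : ℕ)
    (B : ℤ → ℤ → Matrix (Fin k) (Fin k) ℂ)
    (hfin : ∀ i, {j : ℤ | B i j ≠ 0}.Finite)
    (A : Set ℤ)
    (x : ℤ → (Matrix (Fin k) (Fin k) ℂ →ₗ[ℂ] ℂ))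
    (hpos : ∀ i (X : Matrix (Fin k) (Fin k) ℂ), X.PosSemidef →
      0 ≤ (x i X).re ∧ (x i X).im = 0)
    (hA : ∀ i ∈ A, ∀ X : Matrix (Fin k) (Fin k) ℂ, x i X = Matrix.trace X)
    (hrec : ∀ i ∉ A, ∀ X : Matrix (Fin k) (Fin k) ℂ, X.PosSemidef →
      x i X = ∑' j : ℤ, x j (B i j * X * (B i j)ᴴ)) :
    ∀ i : ℤ, ∀ ρ : Matrix (Fin k) (Fin k) ℂ, ρ.PosSemidef → Matrix.trace ρ = 1 →
      hitProb B A i ρ ≤ (x i ρ).re := by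
  intro i ρ hρ htr
  by_cases hi : i ∈ A
  · simp [hitProb, hi, hA i hi ρ, htr]
  · rw [hitProb, if_neg hi]
    have hpos' := fun i X hX => (hpos i X hX).1
    exact tsum_le_of_sum_le' (hpos' i ρ hρ) fun F =>
      sum_pathWeight_le_of_r_le hfin hpos' hA hrec (F.sup FPPath.r) hi hρ F
        fun p hp => Finset.le_sup hp

/-- minimality of hitting probabilities. If (x_i) is a family of linear
functionals, nonnegative on positive semidefinite matrices, equal to the trace on A,
and satisfying x_i(X) = ∑_j x_j(B_i^j X (B_i^j)*) for i ∉ A and X positive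
semidefinite, then x_i(ρ) ≥ h_i^A(ρ) for every i and every density matrix ρ. -/
theorem hitProb_minimal (k : ℕ) (hk : 1 ≤ k)
    (B : ℤ → ℤ → Matrix (Fin k) (Fin k) ℂ)
    (hfin : ∀ i, {j : ℤ | B i j ≠ 0}.Finite)
    (hunit : ∀ i, ∑ᶠ j : ℤ, (B i j)ᴴ * B i j = 1)
    (A : Set ℤ)
    (x : ℤ → (Matrix (Fin k) (Fin k) ℂ →ₗ[ℂ] ℂ))
    (hpos : ∀ i (X : Matrix (Fin k) (Fin k) ℂ), X.PosSemidef →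
      0 ≤ (x i X).re ∧ (x i X).im = 0)
    (hA : ∀ i ∈ A, ∀ X : Matrix (Fin k) (Fin k) ℂ, x i X = Matrix.trace X)
    (hrec : ∀ i ∉ A, ∀ X : Matrix (Fin k) (Fin k) ℂ, X.PosSemidef →
      x i X = ∑' j : ℤ, x j (B i j * X * (B i j)ᴴ)) :
    ∀ i : ℤ, ∀ ρ : Matrix (Fin k) (Fin k) ℂ, ρ.PosSemidef → Matrix.trace ρ = 1 →
      hitProb B A i ρ ≤ (x i ρ).re :=
  hitProb_minimal_general k B hfin A x hpos hA hrec
end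

section
/- Let (B_i^j)_{i,j∈ℤ} define an OQRW on ℤ, let a ≥ 1, D = {i ∈ ℤ : −a < i < a}, ∂D = {−a, a}, and assume B_i^j = 0 whenever i ∈ D and j ∉ D ∪ ∂D. Let c : D → [0,∞) and f : ∂D → [0,∞) be cost functions and φ the associated potential. Suppose (ψ_i)_{i∈D∪∂D} is a family of linear functionals on the k×k complex matrices such that ψ_i(X) ≥ 0 for positive semidefinite X, ψ_j(X) ≥ f(j)·tr(X) for every j ∈ ∂D and positive semidefinite X, and ψ_i(X) ≥ c(i)·tr(X) + ∑_{j∈D∪∂D} ψ_j( B_i^j X (B_i^j)* ) for every i ∈ D and positive semidefinite X. Then ψ_i(ρ) ≥ φ_i(ρ) for every i ∈ D and every density matrix ρ. -/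
open Matrix ComplexOrder
open scoped ENNReal

/-- A first-passage path from `i ∈ D = (−a, a)` to the boundary `∂D = {−a, a}`:
a finite sequence i = x₀, x₁, …, x_r with r ≥ 1, x₀, …, x_{r−1} ∈ D and x_r ∈ ∂D. -/
structure BPath (a i : ℤ) where
  r : ℕ
  x : ℕ → ℤ
  hr : 1 ≤ r
  hx0 : x 0 = i
  hmid : ∀ m, m < r → -a < x m ∧ x m < a
  hlast : x r = -a ∨ x r = a
  htail : ∀ m, r ≤ m → x m = x r

/-- The path operator C = B_{x_{r−1}}^{x_r} ⋯ B_{x₁}^{x₂} B_{x₀}^{x₁}. -/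
noncomputable def bpathOp {k : ℕ} (B : ℤ → ℤ → Matrix (Fin k) (Fin k) ℂ)
    {a i : ℤ} (p : BPath a i) : Matrix (Fin k) (Fin k) ℂ :=
  (List.range p.r).foldl (fun M m => B (p.x m) (p.x (m + 1)) * M) 1

/-- The potential φ_i(X) = ∑ over first-passage paths from i to ∂D of
[c(x₀) + ⋯ + c(x_{r−1}) + f(x_r)]·tr(C X C*), valued in [0, ∞]. -/
noncomputable def potential {k : ℕ} (B : ℤ → ℤ → Matrix (Fin k) (Fin k) ℂ)
    (a : ℤ) (c f : ℤ → ℝ) (i : ℤ) (X : Matrix (Fin k) (Fin k) ℂ) : ℝ≥0∞ :=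
  ∑' p : BPath a i,
    ENNReal.ofReal ((∑ m ∈ Finset.range p.r, c (p.x m)) + f (p.x p.r)) *
      ENNReal.ofReal (Matrix.trace (bpathOp B p * X * (bpathOp B p)ᴴ)).re

/-!
Truncate the potential to paths of length at most `n` and extend it to `∂D` by `f(j)·tr X`.
Splitting a path into its first step `i → j` and the rest (nothing if `j ∈ ∂D`, a path from `j`
if `j ∈ D`) bounds the truncation of level `n + 1` at `i` by
`∑ⱼ (c(i)·Mⁿⱼ(Yⱼ) + φⁿⱼ(Yⱼ))` with `Yⱼ = Bᵢʲ X (Bᵢʲ)*`, where `Mⁿ` is the truncation for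
`c = 0`, `f = 1`. Since `∑ⱼ tr Yⱼ = tr X`, induction on `n` gives first `Mⁿ ≤ tr`, then `φⁿ ≤ ψ`
for any supersolution `ψ`; the potential is the supremum of its truncations.
-/

lemma List.foldl_mul_left_eq_mul {α M : Type*} [Monoid M] (g : α → M) (l : List α) (b : M) :
    l.foldl (fun P m => g m * P) b = l.foldl (fun P m => g m * P) 1 * b := by
  induction l generalizing b with
  | nil => simp
  | cons x l ih => rw [List.foldl_cons, List.foldl_cons, ih, ih (g x * 1), mul_one, mul_assoc]

lemma Matrix.PosSemidef.re_trace_nonneg {n : Type*} [Fintype n] {X : Matrix n n ℂ}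
    (hX : X.PosSemidef) : 0 ≤ (trace X).re :=
  (Complex.nonneg_iff.1 hX.trace_nonneg).1

lemma Matrix.sum_trace_mul_mul_conjTranspose {ι n R : Type*} [Fintype n] [CommSemiring R]
    [StarRing R] (s : Finset ι) (A : ι → Matrix n n R) (X : Matrix n n R) :
    ∑ j ∈ s, trace (A j * X * (A j)ᴴ) = trace ((∑ j ∈ s, (A j)ᴴ * A j) * X) := by
  rw [Finset.sum_mul, trace_sum]
  exact Finset.sum_congr rfl fun j _ => trace_mul_cycle _ _ _

lemma ENNReal.tsum_le_of_forall_tsum_ite_le {α : Type*} (g : α → ℝ≥0∞) (ℓ : α → ℕ) {b : ℝ≥0∞}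
    (h : ∀ n, ∑' x, (if ℓ x ≤ n then g x else 0) ≤ b) : ∑' x, g x ≤ b := by
  rw [ENNReal.tsum_eq_iSup_sum]
  refine iSup_le fun s => ?_
  calc ∑ x ∈ s, g x = ∑ x ∈ s, if ℓ x ≤ s.sup ℓ then g x else 0 :=
        Finset.sum_congr rfl fun x hx => (if_pos (Finset.le_sup hx)).symm
    _ ≤ ∑' x, if ℓ x ≤ s.sup ℓ then g x else 0 := ENNReal.sum_le_tsum s
    _ ≤ b := h _

namespace BPath

variable {a i : ℤ}

lemma start_mem (p : BPath a i) : -a < i ∧ i < a := p.hx0 ▸ p.hmid 0 p.hr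

def shape (p : BPath a i) : ℕ × (ℕ → ℤ) := (p.r, p.x)

lemma shape_injective : Function.Injective (shape : BPath a i → ℕ × (ℕ → ℤ)) := by
  rintro ⟨r, x, _, _, _, _, _⟩ ⟨r', x', _, _, _, _, _⟩ h
  obtain ⟨rfl, rfl⟩ := Prod.mk.inj h
  rfl

def tail (p : BPath a i) (h : 2 ≤ p.r) : BPath a (p.x 1) where
  r := p.r - 1
  x m := p.x (m + 1)
  hr := by omega
  hx0 := rfl
  hmid m hm := p.hmid (m + 1) (by omega)
  hlast := Nat.sub_add_cancel p.hr ▸ p.hlast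
  htail m hm := by
    simp only [Nat.sub_add_cancel p.hr]
    exact p.htail (m + 1) (by omega)

/-- `inl j`: the path stops at `j ∈ ∂D` after one step; `inr ⟨j, q⟩`: it continues as `q`. -/
def uncons (p : BPath a i) : ℤ ⊕ Σ j, BPath a j :=
  if h : 2 ≤ p.r then .inr ⟨p.x 1, p.tail h⟩ else .inl (p.x 1)

def consShape (i : ℤ) : ℤ ⊕ (Σ j, BPath a j) → ℕ × (ℕ → ℤ)
  | .inl j => (1, fun m => if m = 0 then i else j)
  | .inr ⟨_, q⟩ => (q.r + 1, fun m => if m = 0 then i else q.x (m - 1))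

lemma consShape_uncons (p : BPath a i) : consShape i p.uncons = p.shape := by
  unfold uncons
  split_ifs with h
  · refine Prod.ext (by simp only [consShape, tail, shape]; omega) (funext fun m => ?_)
    rcases m with _ | m
    · simp [consShape, shape, p.hx0]
    · simp [consShape, tail, shape]
  · refine Prod.ext (by simp only [consShape, shape]; have := p.hr; omega) (funext fun m => ?_)
    rcases m with _ | m
    · simp [consShape, shape, p.hx0]
    · have hr : p.r = 1 := by have := p.hr; omega
      simp [consShape, shape, p.htail (m + 1) (by omega), hr]

lemma uncons_injective : Function.Injective (uncons : BPath a i → ℤ ⊕ Σ j, BPath a j) :=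
  Function.Injective.of_comp (f := consShape i) <| by
    simpa only [Function.comp_def, consShape_uncons] using shape_injective

lemma tsum_le_tsum_uncons (G : ℤ ⊕ (Σ j, BPath a j) → ℝ≥0∞) :
    ∑' p : BPath a i, G p.uncons ≤ ∑' j, (G (.inl j) + ∑' q : BPath a j, G (.inr ⟨j, q⟩)) := by
  calc ∑' p : BPath a i, G p.uncons ≤ ∑' y, G y :=
        ENNReal.tsum_comp_le_tsum_of_injective uncons_injective G
    _ = _ := by
      rw [ENNReal.summable.tsum_sum ENNReal.summable, ENNReal.tsum_sigma', ENNReal.tsum_add]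

section PathFunctionals

variable {k : ℕ} (B : ℤ → ℤ → Matrix (Fin k) (Fin k) ℂ) (c f : ℤ → ℝ) (p : BPath a i)

noncomputable def weight : ℝ := ∑ m ∈ Finset.range p.r, c (p.x m) + f (p.x p.r)

noncomputable def mass (X : Matrix (Fin k) (Fin k) ℂ) : ℝ≥0∞ :=
  ENNReal.ofReal (trace (bpathOp B p * X * (bpathOp B p)ᴴ)).re

lemma bpathOp_eq_of_r_eq_one (h : p.r = 1) : bpathOp B p = B i (p.x 1) := by
  simp [bpathOp, h, p.hx0]

lemma bpathOp_eq_tail_mul (h : 2 ≤ p.r) : bpathOp B p = bpathOp B (p.tail h) * B i (p.x 1) := by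
  rw [bpathOp, ← Nat.sub_add_cancel p.hr, List.range_succ_eq_map, List.foldl_cons, List.foldl_map,
    List.foldl_mul_left_eq_mul, mul_one, p.hx0]
  rfl

lemma weight_eq_of_r_eq_one (h : p.r = 1) : p.weight c f = c i + f (p.x 1) := by
  simp [weight, h, p.hx0]

lemma weight_eq_add_tail (h : 2 ≤ p.r) : p.weight c f = c i + (p.tail h).weight c f := by
  rw [weight, weight, ← Nat.sub_add_cancel p.hr, Finset.sum_range_succ']
  simp only [p.hx0, tail]
  ring

lemma mass_eq_of_r_eq_one (h : p.r = 1) (X : Matrix (Fin k) (Fin k) ℂ) :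
    p.mass B X = ENNReal.ofReal (trace (B i (p.x 1) * X * (B i (p.x 1))ᴴ)).re := by
  rw [mass, bpathOp_eq_of_r_eq_one B p h]

lemma mass_eq_tail (h : 2 ≤ p.r) (X : Matrix (Fin k) (Fin k) ℂ) :
    p.mass B X = (p.tail h).mass B (B i (p.x 1) * X * (B i (p.x 1))ᴴ) := by
  simp only [mass, bpathOp_eq_tail_mul B p h, conjTranspose_mul, Matrix.mul_assoc]

end PathFunctionals

end BPath

section Truncation

variable {k : ℕ} (B : ℤ → ℤ → Matrix (Fin k) (Fin k) ℂ) (a : ℤ) (c f : ℤ → ℝ)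

noncomputable def truncPotential (n : ℕ) (i : ℤ) (X : Matrix (Fin k) (Fin k) ℂ) : ℝ≥0∞ :=
  if i = -a ∨ i = a then ENNReal.ofReal (f i) * ENNReal.ofReal (trace X).re
  else ∑' p : BPath a i, if p.r ≤ n then ENNReal.ofReal (p.weight c f) * p.mass B X else 0

noncomputable def firstStepTerm (n : ℕ) (i : ℤ) (X : Matrix (Fin k) (Fin k) ℂ) :
    ℤ ⊕ (Σ j, BPath a j) → ℝ≥0∞ :=
  Sum.elim
    (fun j => if j = -a ∨ j = a then
      ENNReal.ofReal (c i + f j) * ENNReal.ofReal (trace (B i j * X * (B i j)ᴴ)).re else 0)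
    (fun q => if q.2.r ≤ n then
      ENNReal.ofReal (c i + q.2.weight c f) * q.2.mass B (B i q.1 * X * (B i q.1)ᴴ) else 0)

lemma firstStepTerm_uncons (n : ℕ) {i : ℤ} (p : BPath a i) (X : Matrix (Fin k) (Fin k) ℂ) :
    firstStepTerm B a c f n i X p.uncons =
      if p.r ≤ n + 1 then ENNReal.ofReal (p.weight c f) * p.mass B X else 0 := by
  by_cases h : 2 ≤ p.r
  · simp only [BPath.uncons, h, dite_true, firstStepTerm, Sum.elim_inr,
      BPath.weight_eq_add_tail c f p h, BPath.mass_eq_tail B p h]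
    exact if_congr (by simp [BPath.tail]) rfl rfl
  · have hr : p.r = 1 := by have := p.hr; omega
    have hx : p.x 1 = -a ∨ p.x 1 = a := hr ▸ p.hlast
    simp [BPath.uncons, firstStepTerm, hx, hr, BPath.weight_eq_of_r_eq_one c f p hr,
      BPath.mass_eq_of_r_eq_one B p hr]

lemma firstStepTerm_fiber_eq_zero (ha : 0 ≤ a) (n : ℕ) (i : ℤ) (X : Matrix (Fin k) (Fin k) ℂ)
    {j : ℤ} (hj : j ∉ Finset.Icc (-a) a) :
    firstStepTerm B a c f n i X (.inl j) + ∑' q : BPath a j,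
      firstStepTerm B a c f n i X (.inr ⟨j, q⟩) = 0 := by
  have : IsEmpty (BPath a j) := ⟨fun q => hj (by have := q.start_mem; simp; omega)⟩
  simp only [tsum_empty, add_zero, firstStepTerm, Sum.elim_inl]
  exact if_neg (by rintro (rfl | rfl) <;> simp at hj <;> omega)

lemma firstStepTerm_fiber_le (n : ℕ) (i : ℤ) (X : Matrix (Fin k) (Fin k) ℂ) (j : ℤ) :
    firstStepTerm B a c f n i X (.inl j) + ∑' q : BPath a j,
        firstStepTerm B a c f n i X (.inr ⟨j, q⟩) ≤
      ENNReal.ofReal (c i) * truncPotential B a 0 1 n j (B i j * X * (B i j)ᴴ)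
        + truncPotential B a c f n j (B i j * X * (B i j)ᴴ) := by
  by_cases hb : j = -a ∨ j = a
  · have : IsEmpty (BPath a j) := ⟨fun q => by have := q.start_mem; omega⟩
    simp only [firstStepTerm, Sum.elim_inl, if_pos hb, tsum_empty, add_zero, truncPotential]
    calc _ ≤ (ENNReal.ofReal (c i) + ENNReal.ofReal (f j)) *
            ENNReal.ofReal (trace (B i j * X * (B i j)ᴴ)).re := by
          gcongr
          exact ENNReal.ofReal_add_le
      _ = _ := by simp [add_mul]
  · simp only [firstStepTerm, Sum.elim_inl, Sum.elim_inr, if_neg hb, zero_add, truncPotential,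
      ← ENNReal.tsum_mul_left, ← ENNReal.tsum_add]
    refine ENNReal.tsum_le_tsum fun q => ?_
    split_ifs
    · simp only [BPath.weight, Pi.zero_apply, Pi.one_apply, Finset.sum_const_zero, zero_add,
        ENNReal.ofReal_one, one_mul, ← add_mul]
      gcongr
      exact ENNReal.ofReal_add_le
    · simp

lemma truncPotential_succ_le (n : ℕ) {i : ℤ} (hi : -a < i) (hi' : i < a)
    (X : Matrix (Fin k) (Fin k) ℂ) :
    truncPotential B a c f (n + 1) i X ≤ ∑ j ∈ Finset.Icc (-a) a,
      (ENNReal.ofReal (c i) * truncPotential B a 0 1 n j (B i j * X * (B i j)ᴴ)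
        + truncPotential B a c f n j (B i j * X * (B i j)ᴴ)) := by
  set G := firstStepTerm B a c f n i X
  rw [truncPotential, if_neg (by omega)]
  simp only [← firstStepTerm_uncons]
  calc _ ≤ ∑' j, (G (.inl j) + ∑' q : BPath a j, G (.inr ⟨j, q⟩)) :=
        BPath.tsum_le_tsum_uncons G
    _ = ∑ j ∈ Finset.Icc (-a) a, (G (.inl j) + ∑' q : BPath a j, G (.inr ⟨j, q⟩)) :=
      tsum_eq_sum fun j hj => firstStepTerm_fiber_eq_zero B a c f (by omega) n i X hj
    _ ≤ _ := Finset.sum_le_sum fun j _ => firstStepTerm_fiber_le B a c f n i X j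

variable (Ψ : ℤ → Matrix (Fin k) (Fin k) ℂ → ℝ≥0∞)

def TraceNonincreasingOn : Prop :=
  ∀ i, -a < i → i < a → ∀ X : Matrix (Fin k) (Fin k) ℂ, X.PosSemidef →
    ∑ j ∈ Finset.Icc (-a) a, ENNReal.ofReal (trace (B i j * X * (B i j)ᴴ)).re
      ≤ ENNReal.ofReal (trace X).re

structure IsSupersolution : Prop where
  boundary : ∀ j, (j = -a ∨ j = a) → ∀ Y : Matrix (Fin k) (Fin k) ℂ, Y.PosSemidef →
    ENNReal.ofReal (f j) * ENNReal.ofReal (trace Y).re ≤ Ψ j Y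
  interior : ∀ i, -a < i → i < a → ∀ X : Matrix (Fin k) (Fin k) ℂ, X.PosSemidef →
    ENNReal.ofReal (c i) * ENNReal.ofReal (trace X).re
      + ∑ j ∈ Finset.Icc (-a) a, Ψ j (B i j * X * (B i j)ᴴ) ≤ Ψ i X

/-- The premise of `hmass` lets the case `c = 0`, `f = 1`, `Ψ = tr` bootstrap itself
(`truncPotential_zero_one_le_trace`). -/
lemma truncPotential_le_of_supersolution (hsub : TraceNonincreasingOn B a)
    (hΨ : IsSupersolution B a c f Ψ)
    (hmass : ∀ n, (∀ j, -a ≤ j → j ≤ a → ∀ Y : Matrix (Fin k) (Fin k) ℂ, Y.PosSemidef →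
        truncPotential B a c f n j Y ≤ Ψ j Y) →
      ∀ j, -a ≤ j → j ≤ a → ∀ Y : Matrix (Fin k) (Fin k) ℂ, Y.PosSemidef →
        truncPotential B a 0 1 n j Y ≤ ENNReal.ofReal (trace Y).re) (n : ℕ) :
    ∀ j, -a ≤ j → j ≤ a → ∀ Y : Matrix (Fin k) (Fin k) ℂ, Y.PosSemidef →
      truncPotential B a c f n j Y ≤ Ψ j Y := by
  induction n with
  | zero => ?_
  | succ n ih => ?_
  all_goals
    intro i hi hi' X hX
    by_cases hb : i = -a ∨ i = a
    · rw [truncPotential, if_pos hb]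
      exact hΨ.boundary i hb X hX
  · rw [truncPotential, if_neg hb, ENNReal.tsum_eq_zero.2 fun p => if_neg (not_le.2 p.hr)]
    exact zero_le
  have hY (j : ℤ) : (B i j * X * (B i j)ᴴ).PosSemidef := hX.mul_mul_conjTranspose_same _
  have hi₁ : -a < i := by omega
  have hi₂ : i < a := by omega
  calc _ ≤ _ := truncPotential_succ_le B a c f n hi₁ hi₂ X
    _ ≤ ∑ j ∈ Finset.Icc (-a) a, (ENNReal.ofReal (c i) *
          ENNReal.ofReal (trace (B i j * X * (B i j)ᴴ)).re + Ψ j (B i j * X * (B i j)ᴴ)) := by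
      gcongr with j hj
      · exact hmass n ih j (Finset.mem_Icc.1 hj).1 (Finset.mem_Icc.1 hj).2 _ (hY j)
      · exact ih j (Finset.mem_Icc.1 hj).1 (Finset.mem_Icc.1 hj).2 _ (hY j)
    _ ≤ ENNReal.ofReal (c i) * ENNReal.ofReal (trace X).re
          + ∑ j ∈ Finset.Icc (-a) a, Ψ j (B i j * X * (B i j)ᴴ) := by
      rw [Finset.sum_add_distrib, ← Finset.mul_sum]
      gcongr
      exact hsub i hi₁ hi₂ X hX
    _ ≤ Ψ i X := hΨ.interior i hi₁ hi₂ X hX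

lemma truncPotential_zero_one_le_trace (hsub : TraceNonincreasingOn B a) (n : ℕ) :
    ∀ j, -a ≤ j → j ≤ a → ∀ Y : Matrix (Fin k) (Fin k) ℂ, Y.PosSemidef →
      truncPotential B a 0 1 n j Y ≤ ENNReal.ofReal (trace Y).re :=
  truncPotential_le_of_supersolution B a 0 1 _ hsub
    ⟨fun _ _ _ _ => by simp, fun i hi hi' X hX => by simpa using hsub i hi hi' X hX⟩
    (fun _ h => h) n

lemma potential_le_of_supersolution (hsub : TraceNonincreasingOn B a)
    (hΨ : IsSupersolution B a c f Ψ) {i : ℤ} (hi : -a < i) (hi' : i < a)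
    {X : Matrix (Fin k) (Fin k) ℂ} (hX : X.PosSemidef) : potential B a c f i X ≤ Ψ i X :=
  ENNReal.tsum_le_of_forall_tsum_ite_le _ BPath.r fun n => by
    have := truncPotential_le_of_supersolution B a c f Ψ hsub hΨ
      (fun n _ => truncPotential_zero_one_le_trace B a hsub n) n i hi.le hi'.le X hX
    rwa [truncPotential, if_neg (by omega)] at this

lemma traceNonincreasingOn_of_sum_eq_one
    (hunit : ∀ i, -a < i → i < a → ∑ j ∈ Finset.Icc (-a) a, (B i j)ᴴ * B i j = 1) :
    TraceNonincreasingOn B a := fun i hi hi' X hX => by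
  rw [← ENNReal.ofReal_sum_of_nonneg fun j _ => (hX.mul_mul_conjTranspose_same _).re_trace_nonneg,
    ← Complex.re_sum, Matrix.sum_trace_mul_mul_conjTranspose, hunit i hi hi', one_mul]

lemma isSupersolution_ofReal_re (ψ : ℤ → Matrix (Fin k) (Fin k) ℂ →ₗ[ℂ] ℂ)
    (hc : ∀ i : ℤ, -a < i → i < a → 0 ≤ c i)
    (hψpos : ∀ i (X : Matrix (Fin k) (Fin k) ℂ), X.PosSemidef → 0 ≤ (ψ i X).re)
    (hψbdry : ∀ j : ℤ, (j = -a ∨ j = a) → ∀ X : Matrix (Fin k) (Fin k) ℂ,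
      X.PosSemidef → f j * (trace X).re ≤ (ψ j X).re)
    (hψint : ∀ i : ℤ, -a < i → i < a → ∀ X : Matrix (Fin k) (Fin k) ℂ, X.PosSemidef →
      c i * (trace X).re + ∑ j ∈ Finset.Icc (-a) a, (ψ j (B i j * X * (B i j)ᴴ)).re
        ≤ (ψ i X).re) :
    IsSupersolution B a c f fun j X => ENNReal.ofReal (ψ j X).re where
  boundary j hj Y hY := by
    rw [← ENNReal.ofReal_mul' hY.re_trace_nonneg]
    exact ENNReal.ofReal_le_ofReal (hψbdry j hj Y hY)
  interior i hi hi' X hX := by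
    have hψY (j : ℤ) := hψpos j _ (hX.mul_mul_conjTranspose_same (B i j))
    rw [← ENNReal.ofReal_mul (hc i hi hi'), ← ENNReal.ofReal_sum_of_nonneg fun j _ => hψY j,
      ← ENNReal.ofReal_add (mul_nonneg (hc i hi hi') hX.re_trace_nonneg)
        (Finset.sum_nonneg fun j _ => hψY j)]
    exact ENNReal.ofReal_le_ofReal (hψint i hi hi' X hX)

end Truncation

lemma sum_Icc_conjTranspose_mul_self_eq_one {k : ℕ} {B : ℤ → ℤ → Matrix (Fin k) (Fin k) ℂ}
    {a : ℤ} (hunit : ∀ i, ∑ᶠ j : ℤ, (B i j)ᴴ * B i j = 1)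
    (hzero : ∀ i j : ℤ, -a < i → i < a → (j < -a ∨ a < j) → B i j = 0)
    {i : ℤ} (hi : -a < i) (hi' : i < a) : ∑ j ∈ Finset.Icc (-a) a, (B i j)ᴴ * B i j = 1 := by
  rw [← hunit i, finsum_eq_finsetSum_of_support_subset]
  intro j hj
  by_contra hj'
  simp only [Finset.coe_Icc, Set.mem_Icc, not_and_or, not_le] at hj'
  simp [hzero i j hi hi' hj'] at hj

theorem potential_minimal_general (k : ℕ)
    (B : ℤ → ℤ → Matrix (Fin k) (Fin k) ℂ)
    (hunit : ∀ i, ∑ᶠ j : ℤ, (B i j)ᴴ * B i j = 1)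
    (a : ℤ)
    (hzero : ∀ i j : ℤ, -a < i → i < a → (j < -a ∨ a < j) → B i j = 0)
    (c f : ℤ → ℝ)
    (hc : ∀ i : ℤ, -a < i → i < a → 0 ≤ c i)
    (ψ : ℤ → (Matrix (Fin k) (Fin k) ℂ →ₗ[ℂ] ℂ))
    (hψpos : ∀ i (X : Matrix (Fin k) (Fin k) ℂ), X.PosSemidef →
      0 ≤ (ψ i X).re ∧ (ψ i X).im = 0)
    (hψbdry : ∀ j : ℤ, (j = -a ∨ j = a) → ∀ X : Matrix (Fin k) (Fin k) ℂ,
      X.PosSemidef → f j * (Matrix.trace X).re ≤ (ψ j X).re)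
    (hψint : ∀ i : ℤ, -a < i → i < a → ∀ X : Matrix (Fin k) (Fin k) ℂ, X.PosSemidef →
      c i * (Matrix.trace X).re
          + ∑ j ∈ Finset.Icc (-a) a, (ψ j (B i j * X * (B i j)ᴴ)).re
        ≤ (ψ i X).re) :
    ∀ i : ℤ, -a < i → i < a →
      ∀ ρ : Matrix (Fin k) (Fin k) ℂ, ρ.PosSemidef → Matrix.trace ρ = 1 →
        potential B a c f i ρ ≤ ENNReal.ofReal ((ψ i ρ).re) := by
  have hsub : TraceNonincreasingOn B a :=
    traceNonincreasingOn_of_sum_eq_one B a fun i hi hi' =>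
      sum_Icc_conjTranspose_mul_self_eq_one hunit hzero hi hi'
  have hΨ := isSupersolution_ofReal_re B a c f ψ hc (fun i X hX => (hψpos i X hX).1) hψbdry hψint
  intro i hi hi' ρ hρ _
  exact potential_le_of_supersolution B a c f _ hsub hΨ hi hi' hρ

/-- minimality of the potential. If (ψ_i) is a family of linear
functionals, nonnegative on positive semidefinite matrices, with
ψ_j(X) ≥ f(j)·tr(X) on ∂D and ψ_i(X) ≥ c(i)·tr(X) + ∑_{j∈D∪∂D} ψ_j(B_i^j X (B_i^j)*)
on D (for positive semidefinite X), then ψ_i(ρ) ≥ φ_i(ρ) for every i ∈ D and every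
density matrix ρ. -/
theorem potential_minimal (k : ℕ) (hk : 1 ≤ k)
    (B : ℤ → ℤ → Matrix (Fin k) (Fin k) ℂ)
    (hfin : ∀ i, {j : ℤ | B i j ≠ 0}.Finite)
    (hunit : ∀ i, ∑ᶠ j : ℤ, (B i j)ᴴ * B i j = 1)
    (a : ℤ) (ha : 1 ≤ a)
    (hzero : ∀ i j : ℤ, -a < i → i < a → (j < -a ∨ a < j) → B i j = 0)
    (c f : ℤ → ℝ)
    (hc : ∀ i : ℤ, -a < i → i < a → 0 ≤ c i)
    (hf : 0 ≤ f (-a) ∧ 0 ≤ f a)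
    (ψ : ℤ → (Matrix (Fin k) (Fin k) ℂ →ₗ[ℂ] ℂ))
    (hψpos : ∀ i (X : Matrix (Fin k) (Fin k) ℂ), X.PosSemidef →
      0 ≤ (ψ i X).re ∧ (ψ i X).im = 0)
    (hψbdry : ∀ j : ℤ, (j = -a ∨ j = a) → ∀ X : Matrix (Fin k) (Fin k) ℂ,
      X.PosSemidef → f j * (Matrix.trace X).re ≤ (ψ j X).re)
    (hψint : ∀ i : ℤ, -a < i → i < a → ∀ X : Matrix (Fin k) (Fin k) ℂ, X.PosSemidef →
      c i * (Matrix.trace X).re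
          + ∑ j ∈ Finset.Icc (-a) a, (ψ j (B i j * X * (B i j)ᴴ)).re
        ≤ (ψ i X).re) :
    ∀ i : ℤ, -a < i → i < a →
      ∀ ρ : Matrix (Fin k) (Fin k) ℂ, ρ.PosSemidef → Matrix.trace ρ = 1 →
        potential B a c f i ρ ≤ ENNReal.ofReal ((ψ i ρ).re) :=
  potential_minimal_general k B hunit a hzero c f hc ψ hψpos hψbdry hψint
end

section
/- Let B, C be k×k complex normal matrices with BC = CB and B*B + C*C = I. Let Φ be the nearest-neighbour open quantum random walk on ℤ acting on finitely supported families ρ = (ρ_i)_{i∈ℤ} of k×k matrices by Φ(ρ)_i = B ρ_{i+1} B* + C ρ_{i−1} C* (B is the left-step matrix, C the right-step matrix). Fix a ∈ ℤ, a density matrix ρ_a, and let ρ be the family supported at site a with value ρ_a. Then for every n ≥ 0 and x ∈ ℤ, the probability p_x^{(n)} = tr( (Φ^n ρ)_x ) of finding the walk at site x at time n satisfies: p_x^{(n)} = binom(n, (n+x−a)/2) · tr( (B*B)^{(n−x+a)/2} (C*C)^{(n+x−a)/2} ρ_a ) if n + x − a is even and |x − a| ≤ n, and p_x^{(n)} =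 0 otherwise. -/
/-!
Since `B` and `C` commute, the `n`-th iterate of `Φ` is a binomial sum over the numbers `i`, `j`
of left and right steps: `(Φⁿ ρ)_x = ∑_{i+j=n} binom(n,i) B^i C^j ρ_{x+i-j} (B^i C^j)*`.
For a state supported at `a` only `i = (n-x+a)/2`, `j = (n+x-a)/2` survive. Cyclicity of the trace
turns that term into `tr((B^i C^j)* B^i C^j ρ_a)`, and `(B^i C^j)* B^i C^j = (B*B)^i (C*C)^j`
because `B`, `C` are normal and `C*` commutes with `B*B = 1 - C*C`.
-/

open Finset

variable {A : Type*}

def oqrwStep [Semiring A] [StarMul A] (b c : A) (σ : ℤ → A) (i : ℤ) : A :=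
  b * σ (i + 1) * star b + c * σ (i - 1) * star c

section Semiring

variable [Semiring A] [StarMul A] {b c : A}

theorem iterate_oqrwStep_apply (hbc : Commute b c) (ρ : ℤ → A) (n : ℕ) (x : ℤ) :
    (oqrwStep b c)^[n] ρ x = ∑ ij ∈ antidiagonal n, n.choose ij.1 •
      (b ^ ij.1 * c ^ ij.2 * ρ (x + ij.1 - ij.2) * star (b ^ ij.1 * c ^ ij.2)) := by
  induction n generalizing x with
  | zero => simp
  | succ n ih =>
    rw [Function.iterate_succ_apply', oqrwStep, ih, ih, add_comm,
      sum_antidiagonal_choose_succ_nsmul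
        (fun i j => b ^ i * c ^ j * ρ (x + i - j) * star (b ^ i * c ^ j))]
    simp only [mul_sum, sum_mul, mul_smul_comm, smul_mul_assoc]
    congr 1
    · refine sum_congr rfl fun ij _ => ?_
      have hsite : x - 1 + ij.1 - ij.2 = x + ij.1 - (ij.2 + 1 : ℕ) := by push_cast; ring
      have hpow : b ^ ij.1 * c ^ (ij.2 + 1) = c * (b ^ ij.1 * c ^ ij.2) := by
        rw [pow_succ', ← mul_assoc, ← mul_assoc, (hbc.symm.pow_right _).eq]
      rw [hsite, hpow]
      simp only [star_mul, mul_assoc]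
    · refine sum_congr rfl fun ij hij => ?_
      have hsite : x + 1 + ij.1 - ij.2 = x + (ij.1 + 1 : ℕ) - ij.2 := by push_cast; ring
      rw [Nat.choose_symm_of_eq_add (HasAntidiagonal.mem_antidiagonal.mp hij).symm, hsite, pow_succ']
      simp only [star_mul, mul_assoc]

variable {ρ : ℤ → A} {a x : ℤ} {n : ℕ}

theorem iterate_oqrwStep_apply_of_eq (hbc : Commute b c) (hρ : ∀ i ≠ a, ρ i = 0)
    {i j : ℕ} (hij : i + j = n) (hx : x + i - j = a) :
    (oqrwStep b c)^[n] ρ x = n.choose i • (b ^ i * c ^ j * ρ a * star (b ^ i * c ^ j)) := by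
  rw [iterate_oqrwStep_apply hbc, sum_eq_single_of_mem (i, j) (HasAntidiagonal.mem_antidiagonal.mpr hij), hx]
  intro ij hij' hne
  have hsite : x + ij.1 - ij.2 ≠ a := by
    rw [HasAntidiagonal.mem_antidiagonal] at hij'
    exact fun h => hne (Prod.ext (by omega) (by omega))
  simp [hρ _ hsite]

theorem iterate_oqrwStep_apply_eq_zero (hbc : Commute b c) (hρ : ∀ i ≠ a, ρ i = 0)
    (hx : ∀ i j : ℕ, i + j = n → x + i - j ≠ a) : (oqrwStep b c)^[n] ρ x = 0 := by
  rw [iterate_oqrwStep_apply hbc]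
  refine sum_eq_zero fun ij hij => ?_
  simp [hρ _ (hx ij.1 ij.2 (HasAntidiagonal.mem_antidiagonal.mp hij))]

end Semiring

theorem star_pow_mul_pow_mul_self [Monoid A] [StarMul A] {b c : A} (hb : Commute (star b) b)
    (hc : Commute (star c) c) (hcb : Commute (star c) (star b * b)) (i j : ℕ) :
    star (b ^ i * c ^ j) * (b ^ i * c ^ j) = (star b * b) ^ i * (star c * c) ^ j :=
  calc star (b ^ i * c ^ j) * (b ^ i * c ^ j)
      _ = star c ^ j * (star b ^ i * b ^ i) * c ^ j := by simp only [star_mul, star_pow, mul_assoc]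
      _ = star c ^ j * (star b * b) ^ i * c ^ j := by rw [hb.mul_pow]
      _ = (star b * b) ^ i * (star c ^ j * c ^ j) := by rw [(hcb.pow_pow j i).eq, mul_assoc]
      _ = (star b * b) ^ i * (star c * c) ^ j := by rw [hc.mul_pow]

theorem commute_star_mul_self_of_add_eq_one [Ring A] [StarMul A] {b c : A}
    (h : star b * b + star c * c = 1) (hc : Commute (star c) c) :
    Commute (star c) (star b * b) := by
  rw [eq_sub_of_add_eq h]
  exact (Commute.one_right _).sub_right ((Commute.refl _).mul_right hc)

open Matrix ComplexOrder

theorem commuting_OQRW_site_probability_general (k : ℕ)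
    (B C : Matrix (Fin k) (Fin k) ℂ)
    (hBnormal : B * Bᴴ = Bᴴ * B) (hCnormal : C * Cᴴ = Cᴴ * C)
    (hBC : B * C = C * B)
    (hunit : Bᴴ * B + Cᴴ * C = 1)
    (Φ : (ℤ → Matrix (Fin k) (Fin k) ℂ) → (ℤ → Matrix (Fin k) (Fin k) ℂ))
    (hΦ : ∀ σ (i : ℤ), Φ σ i = B * σ (i + 1) * Bᴴ + C * σ (i - 1) * Cᴴ)
    (a : ℤ) (ρa : Matrix (Fin k) (Fin k) ℂ)
    (ρ : ℤ → Matrix (Fin k) (Fin k) ℂ)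
    (hsupp : ρ a = ρa) (hsupp' : ∀ i : ℤ, i ≠ a → ρ i = 0)
    (n : ℕ) (x : ℤ) :
    (Even ((n : ℤ) + x - a) ∧ |x - a| ≤ (n : ℤ) →
      Matrix.trace ((Φ^[n] ρ) x) =
        (n.choose ((((n : ℤ) + x - a) / 2).toNat) : ℂ) *
          Matrix.trace ((Bᴴ * B) ^ ((((n : ℤ) - x + a) / 2).toNat) *
            (Cᴴ * C) ^ ((((n : ℤ) + x - a) / 2).toNat) * ρa)) ∧
    (¬(Even ((n : ℤ) + x - a) ∧ |x - a| ≤ (n : ℤ)) →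
      Matrix.trace ((Φ^[n] ρ) x) = 0) := by
  obtain rfl : Φ = oqrwStep B C := funext fun σ => funext (hΦ σ)
  refine ⟨fun ⟨⟨t, ht⟩, hle⟩ => ?_, fun hnot => ?_⟩
  · have hij : ((n - x + a) / 2 : ℤ).toNat + ((n + x - a) / 2 : ℤ).toNat = n := by
      rw [abs_le] at hle; omega
    have hcb := commute_star_mul_self_of_add_eq_one hunit hCnormal.symm
    rw [iterate_oqrwStep_apply_of_eq hBC hsupp' hij (by omega), hsupp, Matrix.trace_smul,
      nsmul_eq_mul, Nat.choose_symm_of_eq_add hij.symm, Matrix.trace_mul_cycle,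
      star_pow_mul_pow_mul_self hBnormal.symm hCnormal.symm hcb, star_eq_conjTranspose,
      star_eq_conjTranspose]
  · rw [iterate_oqrwStep_apply_eq_zero hBC hsupp', Matrix.trace_zero]
    intro i j hij hx
    exact hnot ⟨⟨j, by omega⟩, abs_le.mpr ⟨by omega, by omega⟩⟩

/-- probability formula for a nearest-neighbour OQRW on ℤ with
commuting normal matrices B (left) and C (right), B*B + C*C = I. For the initial
state supported at site a with density ρ_a, the probability of presence at site x
at time n is binom(n, (n+x−a)/2)·tr((B*B)^{(n−x+a)/2} (C*C)^{(n+x−a)/2} ρ_a) when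
n + x − a is even and |x − a| ≤ n, and 0 otherwise. -/
theorem commuting_OQRW_site_probability (k : ℕ) (hk : 1 ≤ k)
    (B C : Matrix (Fin k) (Fin k) ℂ)
    (hBnormal : B * Bᴴ = Bᴴ * B) (hCnormal : C * Cᴴ = Cᴴ * C)
    (hBC : B * C = C * B)
    (hunit : Bᴴ * B + Cᴴ * C = 1)
    (Φ : (ℤ → Matrix (Fin k) (Fin k) ℂ) → (ℤ → Matrix (Fin k) (Fin k) ℂ))
    (hΦ : ∀ σ (i : ℤ), Φ σ i = B * σ (i + 1) * Bᴴ + C * σ (i - 1) * Cᴴ)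
    (a : ℤ) (ρa : Matrix (Fin k) (Fin k) ℂ)
    (hρa : ρa.PosSemidef) (htra : Matrix.trace ρa = 1)
    (ρ : ℤ → Matrix (Fin k) (Fin k) ℂ)
    (hsupp : ρ a = ρa) (hsupp' : ∀ i : ℤ, i ≠ a → ρ i = 0)
    (n : ℕ) (x : ℤ) :
    (Even ((n : ℤ) + x - a) ∧ |x - a| ≤ (n : ℤ) →
      Matrix.trace ((Φ^[n] ρ) x) =
        (n.choose ((((n : ℤ) + x - a) / 2).toNat) : ℂ) *
          Matrix.trace ((Bᴴ * B) ^ ((((n : ℤ) - x + a) / 2).toNat) *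
            (Cᴴ * C) ^ ((((n : ℤ) + x - a) / 2).toNat) * ρa)) ∧
    (¬(Even ((n : ℤ) + x - a) ∧ |x - a| ≤ (n : ℤ)) →
      Matrix.trace ((Φ^[n] ρ) x) = 0) :=
  commuting_OQRW_site_probability_general k B C hBnormal hCnormal hBC hunit Φ hΦ a ρa ρ hsupp hsupp'
    n x
end

section
/- Let B, C be k×k complex normal matrices with BC = CB and B*B + C*C = I, defining the nearest-neighbour open quantum random walk on ℤ with left-step matrix B and right-step matrix C. For x ∈ ℤ, x ≠ 0, and n ≥ 1, let b_n(ρ₀; x) = ∑_W tr(W ρ₀ W*), the sum over all nearest-neighbour paths 0 = x₀, x₁, …, x_n = x with |x_m − x_{m−1}| = 1 and x_m ≠ x for m < n, where W is the product (latest step leftmost) of B for each leftward step and C for each rightward step. Then, for n ≥ |x| with n + x even: b_n(ρ₀; x) = (|x|/n) · binom(n, (n+x)/2) · tr( (B*B)^{(n−x)/2} (C*C)^{(n+x)/2} ρ₀ ), and b_n(ρ₀; x) = 0 when n + x is odd. -/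
/-!
Since `B` and `C` commute, the word of a path with `l` left and `r` right steps is
`W = B ^ l * C ^ r`, and normality together with `B*B + C*C = 1` gives
`W* W = (B*B) ^ l * (C*C) ^ r`. As `l` and `r` are determined by `n` and `x`, every first-visit
path contributes the same trace, so `b_n(ρ₀; x)` is that trace times the number of first-visit
paths. This number is `|x| / n * binom(n, (n + x) / 2)` by the hitting time theorem for the simple
walk, which follows from the first-step recursion and the reflection principle: for `x > 0`, the
paths first visiting `x` at time `m + 1` are counted by the difference of the numbers of walks of
length `m` to `x - 1` and to `x + 1`.
-/
open Matrix ComplexOrder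

/-- A nearest-neighbour path of length n from 0 to x which does not visit x before
time n (frozen at x from time n on, so the data is exactly the finite path). -/
def IsFirstVisitPath (n : ℕ) (x : ℤ) (p : ℕ → ℤ) : Prop :=
  p 0 = 0 ∧ p n = x ∧
  (∀ m, m < n → p (m + 1) - p m = 1 ∨ p (m + 1) - p m = -1) ∧
  (∀ m, m < n → p m ≠ x) ∧
  (∀ m, n ≤ m → p m = x)

/-- The word operator of a nearest-neighbour path: the product (latest step leftmost)
of B for each leftward step and C for each rightward step. -/
noncomputable def wordOp {k : ℕ} (B C : Matrix (Fin k) (Fin k) ℂ)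
    (n : ℕ) (p : ℕ → ℤ) : Matrix (Fin k) (Fin k) ℂ :=
  (List.range n).foldl
    (fun M m => (if p (m + 1) = p m - 1 then B else C) * M) 1

/-- b_n(ρ₀; x): the probability that the walk started at 0 with internal state ρ₀
visits site x for the first time at time n. -/
noncomputable def firstVisitProb {k : ℕ} (B C : Matrix (Fin k) (Fin k) ℂ)
    (n : ℕ) (x : ℤ) (ρ₀ : Matrix (Fin k) (Fin k) ℂ) : ℝ :=
  ∑' q : {p : ℕ → ℤ // IsFirstVisitPath n x p},
    (Matrix.trace (wordOp B C n q.val * ρ₀ * (wordOp B C n q.val)ᴴ)).re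

namespace IsFirstVisitPath

variable {n : ℕ} {x : ℤ} {p : ℕ → ℤ}

theorem even_add (hp : IsFirstVisitPath n x p) : Even ((n : ℤ) + x) := by
  obtain ⟨h0, hn, hstep, -, -⟩ := hp
  have h_partial : ∀ m ≤ n, Even ((m : ℤ) + p m) := by
    intro m
    induction m with
    | zero => simp [h0]
    | succ m ih =>
      intro hm
      obtain ⟨t, ht⟩ := ih (by omega)
      rcases hstep m (by omega) with h | h
      · exact ⟨t + 1, by push_cast; omega⟩
      · exact ⟨t, by push_cast; omega⟩
  simpa [hn] using h_partial n le_rfl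

theorem neg (hp : IsFirstVisitPath n x p) : IsFirstVisitPath n (-x) (-p) := by
  obtain ⟨h0, hn, hstep, havoid, hfrozen⟩ := hp
  refine ⟨by simp [h0], by simp [hn], fun m hm => ?_, fun m hm => ?_, fun m hm => ?_⟩
  · simp only [Pi.neg_apply]; have := hstep m hm; omega
  · simp only [Pi.neg_apply]; have := havoid m hm; omega
  · simp [hfrozen m hm]

theorem zero_iff : IsFirstVisitPath 0 x p ↔ x = 0 ∧ p = 0 := by
  constructor
  · rintro ⟨h0, hn, -, -, hfrozen⟩
    exact ⟨hn ▸ h0, funext fun m => (hfrozen m m.zero_le).trans (hn ▸ h0)⟩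
  · rintro ⟨rfl, rfl⟩
    exact ⟨rfl, rfl, by simp, by simp, by simp⟩

theorem one_eq (hp : IsFirstVisitPath (n + 1) x p) : p 1 = 1 ∨ p 1 = -1 := by
  simpa [hp.1] using hp.2.2.1 0 n.succ_pos

theorem tail (hp : IsFirstVisitPath (n + 1) x p) :
    IsFirstVisitPath n (x - p 1) (fun m => p (m + 1) - p 1) := by
  obtain ⟨h0, hn, hstep, havoid, hfrozen⟩ := hp
  refine ⟨by simp, by simp [hn], fun m hm => ?_, fun m hm => ?_, fun m hm => ?_⟩
  · have := hstep (m + 1) (by omega); dsimp only; omega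
  · have := havoid (m + 1) (by omega); dsimp only; omega
  · simp [hfrozen (m + 1) (by omega)]

def stepThen (s : ℤ) (q : ℕ → ℤ) : ℕ → ℤ
  | 0 => 0
  | m + 1 => q m + s

theorem stepThen_of (hx : x ≠ 0) {s : ℤ} (hs : s = 1 ∨ s = -1) {q : ℕ → ℤ}
    (hq : IsFirstVisitPath n (x - s) q) : IsFirstVisitPath (n + 1) x (stepThen s q) := by
  obtain ⟨h0, hn, hstep, havoid, hfrozen⟩ := hq
  refine ⟨rfl, by simp [stepThen, hn], fun m hm => ?_, fun m hm => ?_, fun m hm => ?_⟩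
  · rcases m with _ | m
    · simp [stepThen, h0, hs]
    · simpa [stepThen] using hstep m (by omega)
  · rcases m with _ | m
    · exact hx.symm
    · have := havoid m (by omega); simp [stepThen]; omega
  · obtain ⟨m, rfl⟩ : ∃ j, m = j + 1 := ⟨m - 1, by omega⟩
    simp [stepThen, hfrozen m (by omega)]

end IsFirstVisitPath

open IsFirstVisitPath in
def firstStepEquiv {n : ℕ} {x : ℤ} (hx : x ≠ 0) :
    {p : ℕ → ℤ // IsFirstVisitPath (n + 1) x p} ≃
      {q : ℕ → ℤ // IsFirstVisitPath n (x - 1) q} ⊕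
        {q : ℕ → ℤ // IsFirstVisitPath n (x + 1) q} where
  toFun p :=
    if h : p.1 1 = 1 then .inl ⟨fun m => p.1 (m + 1) - 1, by simpa [h] using p.2.tail⟩
    else
      have h' : p.1 1 = -1 := p.2.one_eq.resolve_left h
      .inr ⟨fun m => p.1 (m + 1) + 1, by simpa [h'] using p.2.tail⟩
  invFun := Sum.elim (fun q => ⟨stepThen 1 q.1, stepThen_of hx (.inl rfl) q.2⟩)
    (fun q => ⟨stepThen (-1) q.1, stepThen_of hx (.inr rfl) (by simpa using q.2)⟩)
  left_inv := by
    rintro ⟨p, hp⟩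
    apply Subtype.ext
    funext m
    rcases hp.one_eq with h1 | h1 <;> rcases m with _ | m <;> simp [stepThen, hp.1, h1]
  right_inv := by
    rintro (⟨q, hq⟩ | ⟨q, hq⟩) <;> simp [stepThen, hq.1]

theorem finite_firstVisitPath (n : ℕ) (x : ℤ) :
    Finite {p : ℕ → ℤ // IsFirstVisitPath n x p} := by
  induction n generalizing x with
  | zero =>
    refine @Finite.of_subsingleton _ ⟨fun p q => Subtype.ext ?_⟩
    rw [(IsFirstVisitPath.zero_iff.1 p.2).2, (IsFirstVisitPath.zero_iff.1 q.2).2]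
  | succ n ih =>
    by_cases hx : x = 0
    · refine @Finite.of_subsingleton _ ⟨fun p => absurd p.2.1 ?_⟩
      exact hx ▸ p.2.2.2.2.1 0 n.succ_pos
    · exact Finite.of_equiv _ (firstStepEquiv hx).symm

noncomputable def firstVisitCount (n : ℕ) (x : ℤ) : ℕ :=
  Nat.card {p : ℕ → ℤ // IsFirstVisitPath n x p}

theorem firstVisitCount_zero (x : ℤ) : firstVisitCount 0 x = if x = 0 then 1 else 0 := by
  simp only [firstVisitCount, IsFirstVisitPath.zero_iff]
  split_ifs with hx <;> simp [hx]

theorem firstVisitCount_succ_zero (n : ℕ) : firstVisitCount (n + 1) 0 = 0 :=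
  @Nat.card_of_isEmpty _ ⟨fun p => p.2.2.2.2.1 0 n.succ_pos p.2.1⟩

theorem firstVisitCount_succ {x : ℤ} (n : ℕ) (hx : x ≠ 0) :
    firstVisitCount (n + 1) x = firstVisitCount n (x - 1) + firstVisitCount n (x + 1) := by
  have := finite_firstVisitPath n (x - 1)
  have := finite_firstVisitPath n (x + 1)
  rw [firstVisitCount, Nat.card_congr (firstStepEquiv hx), Nat.card_sum]
  rfl

theorem firstVisitCount_neg (n : ℕ) (x : ℤ) : firstVisitCount n (-x) = firstVisitCount n x :=
  Nat.card_congr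
    { toFun p := ⟨-p.1, by simpa using p.2.neg⟩
      invFun p := ⟨-p.1, p.2.neg⟩
      left_inv p := by simp
      right_inv p := by simp }

theorem firstVisitCount_eq_zero_of_not_even {n : ℕ} {x : ℤ} (h : ¬Even ((n : ℤ) + x)) :
    firstVisitCount n x = 0 :=
  @Nat.card_of_isEmpty _ ⟨fun p => h p.2.even_add⟩

/-- The number of nearest-neighbour walks of length `m` from `0` to `y`. -/
def walkCount : ℕ → ℤ → ℕ
  | 0, y => if y = 0 then 1 else 0
  | m + 1, y => walkCount m (y - 1) + walkCount m (y + 1)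

theorem walkCount_neg (m : ℕ) (y : ℤ) : walkCount m (-y) = walkCount m y := by
  induction m generalizing y with
  | zero => simp [walkCount]
  | succ m ih => rw [walkCount, walkCount, ← ih (y + 1), ← ih (y - 1), add_comm]; ring_nf

theorem walkCount_two_mul_sub (m k : ℕ) : walkCount m (2 * k - m) = m.choose k := by
  induction m generalizing k with
  | zero => rcases k with _ | k <;> simp [walkCount]; omega
  | succ m ih =>
    rcases k with _ | k
    · have h_far : walkCount m (-m - 2) = 0 := by
        rw [← walkCount_neg, show -(-(m : ℤ) - 2) = 2 * (m + 1 : ℕ) - m by push_cast; ring,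
          ih, Nat.choose_succ_self]
      have h_near : walkCount m (-m) = 1 := by simpa using ih 0
      simp only [walkCount, CharP.cast_eq_zero, mul_zero, zero_sub, Nat.choose_zero_right]
      rw [show -((m + 1 : ℕ) : ℤ) - 1 = -m - 2 by push_cast; ring,
        show -((m + 1 : ℕ) : ℤ) + 1 = -m by push_cast; ring, h_far, h_near]
    · rw [walkCount, Nat.choose_succ_succ, ← ih k, ← ih (k + 1)]
      congr 2 <;> push_cast <;> ring

/-- The reflection principle. -/
theorem natCast_firstVisitCount_succ {x : ℤ} (m : ℕ) (hx : 0 < x) :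
    (firstVisitCount (m + 1) x : ℤ) = walkCount m (x - 1) - walkCount m (x + 1) := by
  induction m generalizing x with
  | zero =>
    rw [firstVisitCount_succ 0 hx.ne', firstVisitCount_zero, firstVisitCount_zero]
    simp only [walkCount]
    split_ifs <;> push_cast <;> omega
  | succ m ih =>
    have h_left : (firstVisitCount (m + 1) (x - 1) : ℤ) =
        walkCount m (x - 1 - 1) - walkCount m (x - 1 + 1) := by
      rcases (show 0 ≤ x - 1 by omega).eq_or_lt with h | h
      · rw [← h, firstVisitCount_succ_zero, zero_sub, zero_add, walkCount_neg]; simp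
      · exact ih h
    rw [firstVisitCount_succ _ hx.ne', Nat.cast_add, h_left, ih (by omega)]
    simp only [walkCount]
    push_cast
    ring_nf

/-- The hitting time theorem for the simple walk on `ℤ`. -/
theorem natCast_mul_firstVisitCount {n : ℕ} {x : ℤ} (h : Even ((n : ℤ) + x)) :
    (n : ℤ) * firstVisitCount n x = |x| * walkCount n x := by
  wlog hx : 0 ≤ x generalizing x
  · simpa [firstVisitCount_neg, walkCount_neg] using
      this (x := -x) (by simpa [Int.even_add] using h) (by omega)
  rcases hx.eq_or_lt with rfl | hx
  · rcases n with _ | n <;> simp [firstVisitCount_succ_zero]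
  rcases n with _ | m
  · simp [firstVisitCount_zero, walkCount, hx.ne']
  obtain ⟨k, rfl⟩ : ∃ k : ℕ, x = 2 * k + 1 - m := by
    obtain ⟨t, ht⟩ := h
    exact ⟨(t - 1).toNat, by omega⟩
  have h_choose : ((m : ℤ) - k) * m.choose k = (k + 1) * m.choose (k + 1) := by
    rcases le_or_gt k m with hkm | hkm
    · have := Nat.choose_succ_right_eq m k
      zify [hkm] at this
      linarith
    · simp [Nat.choose_eq_zero_of_lt hkm, Nat.choose_eq_zero_of_lt (hkm.trans k.lt_succ_self)]
  rw [natCast_firstVisitCount_succ m hx, walkCount, abs_of_pos hx,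
    show (2 * k + 1 - m : ℤ) - 1 = 2 * k - m by ring, walkCount_two_mul_sub,
    show (2 * k + 1 - m : ℤ) + 1 = 2 * (k + 1 : ℕ) - m by push_cast; ring,
    walkCount_two_mul_sub]
  push_cast
  linear_combination 2 * h_choose

theorem star_mul_pow_mul_pow {R : Type*} [Ring R] [StarRing R] {B C : R} [IsStarNormal B]
    [IsStarNormal C] (h : star B * B + star C * C = 1) (a b : ℕ) :
    star (B ^ a * C ^ b) * (B ^ a * C ^ b) = (star B * B) ^ a * (star C * C) ^ b := by
  have hB : Commute (star B) B := star_comm_self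
  have hC : Commute (star C) C := star_comm_self
  have h_comm : Commute (star B * B) (star C) := by
    rw [eq_sub_of_add_eq h]
    exact (Commute.one_left _).sub_left ((Commute.refl _).mul_left hC.symm)
  calc star (B ^ a * C ^ b) * (B ^ a * C ^ b)
      = star C ^ b * (star B ^ a * B ^ a) * C ^ b := by simp only [star_mul, star_pow, mul_assoc]
    _ = (star B * B) ^ a * (star C ^ b * C ^ b) := by
      rw [← hB.mul_pow, ← (h_comm.pow_pow a b).eq, mul_assoc]
    _ = (star B * B) ^ a * (star C * C) ^ b := by rw [hC.mul_pow]

section wordOp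

variable {k : ℕ} (B C : Matrix (Fin k) (Fin k) ℂ)

theorem wordOp_succ (n : ℕ) (p : ℕ → ℤ) :
    wordOp B C (n + 1) p = (if p (n + 1) = p n - 1 then B else C) * wordOp B C n p := by
  rw [wordOp, List.range_succ, List.foldl_append, List.foldl_cons, List.foldl_nil, wordOp]

variable {B C}

theorem wordOp_eq_pow_mul_pow (hBC : Commute B C) {n : ℕ} {p : ℕ → ℤ} (h0 : p 0 = 0)
    (hstep : ∀ m < n, p (m + 1) - p m = 1 ∨ p (m + 1) - p m = -1) :
    ∃ a b : ℕ, a + b = n ∧ (b : ℤ) - a = p n ∧ wordOp B C n p = B ^ a * C ^ b := by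
  induction n with
  | zero => exact ⟨0, 0, rfl, by simp [h0], by simp [wordOp]⟩
  | succ n ih =>
    obtain ⟨a, b, hab, hp, hW⟩ := ih fun m hm => hstep m (by omega)
    rw [wordOp_succ, hW]
    by_cases hleft : p (n + 1) = p n - 1
    · refine ⟨a + 1, b, by omega, by push_cast; omega, ?_⟩
      rw [if_pos hleft, ← mul_assoc, ← pow_succ']
    · refine ⟨a, b + 1, by omega, by have := hstep n n.lt_succ_self; push_cast; omega, ?_⟩
      rw [if_neg hleft, ← mul_assoc, ((hBC.pow_left a).eq).symm, mul_assoc, ← pow_succ']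

theorem firstVisitProb_eq_firstVisitCount_mul (hBC : Commute B C) [IsStarNormal B]
    [IsStarNormal C] (hunit : Bᴴ * B + Cᴴ * C = 1) (n : ℕ) (x : ℤ)
    (ρ : Matrix (Fin k) (Fin k) ℂ) :
    firstVisitProb B C n x ρ = firstVisitCount n x *
      (trace ((Bᴴ * B) ^ (((n : ℤ) - x) / 2).toNat *
        (Cᴴ * C) ^ (((n : ℤ) + x) / 2).toNat * ρ)).re := by
  rw [← star_eq_conjTranspose, ← star_eq_conjTranspose] at hunit
  rw [firstVisitProb, firstVisitCount, ← nsmul_eq_mul, ← tsum_const]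
  congr 1
  funext ⟨p, hp⟩
  obtain ⟨a, b, hab, hba, hW⟩ := wordOp_eq_pow_mul_pow hBC hp.1 hp.2.2.1
  obtain ⟨rfl, rfl⟩ : a = (((n : ℤ) - x) / 2).toNat ∧ b = (((n : ℤ) + x) / 2).toNat := by
    have := hp.2.1; omega
  rw [hW, trace_mul_cycle, ← star_eq_conjTranspose, star_mul_pow_mul_pow hunit]
  rfl

end wordOp

theorem commuting_OQRW_first_visit_general (k : ℕ)
    (B C : Matrix (Fin k) (Fin k) ℂ)
    (hBnormal : B * Bᴴ = Bᴴ * B) (hCnormal : C * Cᴴ = Cᴴ * C)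
    (hBC : B * C = C * B)
    (hunit : Bᴴ * B + Cᴴ * C = 1)
    (ρ₀ : Matrix (Fin k) (Fin k) ℂ)
    (x : ℤ) (n : ℕ) (hn : 1 ≤ n) :
    (Even ((n : ℤ) + x) ∧ |x| ≤ (n : ℤ) →
      firstVisitProb B C n x ρ₀ =
        ((|x| : ℤ) : ℝ) / (n : ℝ) *
          (n.choose ((((n : ℤ) + x) / 2).toNat) : ℝ) *
          (Matrix.trace ((Bᴴ * B) ^ ((((n : ℤ) - x) / 2).toNat) *
            (Cᴴ * C) ^ ((((n : ℤ) + x) / 2).toNat) * ρ₀)).re) ∧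
    (¬ Even ((n : ℤ) + x) → firstVisitProb B C n x ρ₀ = 0) := by
  have : IsStarNormal B := ⟨hBnormal.symm⟩
  have : IsStarNormal C := ⟨hCnormal.symm⟩
  rw [firstVisitProb_eq_firstVisitCount_mul hBC hunit]
  refine ⟨fun ⟨h_even, h_le⟩ => ?_,
    fun h_odd => by simp [firstVisitCount_eq_zero_of_not_even h_odd]⟩
  have h_walk : walkCount n x = n.choose (((n : ℤ) + x) / 2).toNat := by
    rw [← walkCount_two_mul_sub]
    congr 1
    obtain ⟨t, ht⟩ := h_even
    have := neg_abs_le x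
    omega
  have h_count := natCast_mul_firstVisitCount h_even
  rw [h_walk] at h_count
  have h_count_real :
      (n : ℝ) * firstVisitCount n x = |(x : ℝ)| * n.choose (((n : ℤ) + x) / 2).toNat := by
    exact_mod_cast h_count
  rw [Int.cast_abs, div_mul_eq_mul_div, ← h_count_real,
    mul_div_cancel_left₀ _ (by positivity)]

/-- hitting time formula for a nearest-neighbour OQRW on ℤ with
commuting normal matrices B (left) and C (right), B*B + C*C = I. For x ≠ 0 and
n ≥ |x| with n + x even,
b_n(ρ₀; x) = (|x|/n)·binom(n, (n+x)/2)·tr((B*B)^{(n−x)/2} (C*C)^{(n+x)/2} ρ₀),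
and b_n(ρ₀; x) = 0 when n + x is odd. -/
theorem commuting_OQRW_first_visit (k : ℕ) (hk : 1 ≤ k)
    (B C : Matrix (Fin k) (Fin k) ℂ)
    (hBnormal : B * Bᴴ = Bᴴ * B) (hCnormal : C * Cᴴ = Cᴴ * C)
    (hBC : B * C = C * B)
    (hunit : Bᴴ * B + Cᴴ * C = 1)
    (ρ₀ : Matrix (Fin k) (Fin k) ℂ) (hρ₀ : ρ₀.PosSemidef) (htr : Matrix.trace ρ₀ = 1)
    (x : ℤ) (hx : x ≠ 0) (n : ℕ) (hn : 1 ≤ n) :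
    (Even ((n : ℤ) + x) ∧ |x| ≤ (n : ℤ) →
      firstVisitProb B C n x ρ₀ =
        ((|x| : ℤ) : ℝ) / (n : ℝ) *
          (n.choose ((((n : ℤ) + x) / 2).toNat) : ℝ) *
          (Matrix.trace ((Bᴴ * B) ^ ((((n : ℤ) - x) / 2).toNat) *
            (Cᴴ * C) ^ ((((n : ℤ) + x) / 2).toNat) * ρ₀)).re) ∧
    (¬ Even ((n : ℤ) + x) → firstVisitProb B C n x ρ₀ = 0) :=
  commuting_OQRW_first_visit_general k B C hBnormal hCnormal hBC hunit ρ₀ x n hn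
end

section
/- Consider the open quantum random walk on the four sites {1,2,3,4} with internal dimension k, determined by k×k matrices L, R with L*L + R*R = I, via the transition matrices B₁¹ = I, B₂¹ = L, B₂³ = R, B₃² = L, B₃⁴ = R, B₄⁴ = I, and all other B_i^j = 0 (so sites 1 and 4 are absorbing). Let η be a density matrix which is an eigenmatrix of the conjugation by LR: (LR) η (LR)* = λ η for some real λ with 0 ≤ λ < 1. Then the hitting probability of site 4 starting from site 2 with internal state η is h₂^{{4}}(η) = tr( R² η (R²)* ) / (1 − λ). Explicitly, the first-passage paths from 2 to {4} have path operators R²(LR)^m, m ≥ 0, and ∑_{m=0}^∞ tr( R²(LR)^m η ((LR)^m)* (R²)* ) = tr(R² η (R²)*)/(1 − λ). -/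
open Matrix ComplexOrder

/-- The transition matrices of the four-site walk: B₁¹ = I, B₂¹ = L, B₂³ = R,
B₃² = L, B₃⁴ = R, B₄⁴ = I, and all other B_i^j = 0 (sites 1 and 4 absorbing). -/
noncomputable def fourSiteB {k : ℕ} (L R : Matrix (Fin k) (Fin k) ℂ) :
    ℤ → ℤ → Matrix (Fin k) (Fin k) ℂ := fun i j =>
  if i = 1 ∧ j = 1 then 1
  else if i = 2 ∧ j = 1 then L
  else if i = 2 ∧ j = 3 then R
  else if i = 3 ∧ j = 2 then L
  else if i = 3 ∧ j = 4 then R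
  else if i = 4 ∧ j = 4 then 1
  else 0

/-!
A step of nonzero weight leaves site 2 only for 1 or 3 and site 3 only for 2 or 4, and site 1
is absorbing. Hence the only first-passage paths from 2 to 4 with nonzero operator are
2, 3, 2, 3, …, 2, 3, 4, with operators R²(LR)^m. Iterating the eigen-relation gives
(LR)^m η ((LR)^m)* = λ^m η, so their weights form a geometric series of ratio λ.
-/

section PathProduct

variable {k : ℕ} (B : ℤ → ℤ → Matrix (Fin k) (Fin k) ℂ)

noncomputable def pathProd (x : ℕ → ℤ) : ℕ → Matrix (Fin k) (Fin k) ℂ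
  | 0 => 1
  | n + 1 => B (x n) (x (n + 1)) * pathProd x n

theorem pathOp_eq_pathProd {A : Set ℤ} {i : ℤ} (p : FPPath A i) :
    pathOp B p = pathProd B p.x p.r := by
  suffices ∀ n, (List.range n).foldl (fun M m => B (p.x m) (p.x (m + 1)) * M) 1 =
      pathProd B p.x n from this p.r
  intro n
  induction n with
  | zero => rfl
  | succ n ih => rw [List.range_succ, List.foldl_append, ih]; rfl

theorem pathProd_eq_zero {x : ℕ → ℤ} {n j : ℕ} (hj : j < n) (hB : B (x j) (x (j + 1)) = 0) :
    pathProd B x n = 0 := by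
  induction n with
  | zero => omega
  | succ n ih =>
    rcases Nat.lt_succ_iff_lt_or_eq.1 hj with hj | rfl
    · rw [pathProd, ih hj, mul_zero]
    · rw [pathProd, hB, zero_mul]

theorem pathProd_add (x : ℕ → ℤ) (n l : ℕ) :
    pathProd B x (n + l) = pathProd B (fun i => x (i + l)) n * pathProd B x l := by
  induction n with
  | zero => simp [pathProd]
  | succ n ih =>
    rw [Nat.add_right_comm, pathProd, ih, pathProd, ← mul_assoc, Nat.add_right_comm]

end PathProduct

section Eigenmatrix

variable {n : Type*} [Fintype n] [DecidableEq n]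

theorem conj_pow_eq_pow_smul {α : Type*} [CommSemiring α] [StarRing α]
    {M η : Matrix n n α} {c : α} (h : M * η * Mᴴ = c • η) (m : ℕ) :
    M ^ m * η * (M ^ m)ᴴ = c ^ m • η := by
  induction m with
  | zero => simp
  | succ m ih =>
    calc M ^ (m + 1) * η * (M ^ (m + 1))ᴴ = M * (M ^ m * η * (M ^ m)ᴴ) * Mᴴ := by
          simp only [pow_succ', conjTranspose_mul, Matrix.mul_assoc]
      _ = c ^ (m + 1) • η := by
          rw [ih, Matrix.mul_smul, Matrix.smul_mul, h, smul_smul, pow_succ]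

variable {A M η : Matrix n n ℂ} {lam : ℝ}

theorem re_trace_conj_mul_pow (h : M * η * Mᴴ = (lam : ℂ) • η) (m : ℕ) :
    (trace (A * M ^ m * η * (A * M ^ m)ᴴ)).re = lam ^ m * (trace (A * η * Aᴴ)).re := by
  calc (trace (A * M ^ m * η * (A * M ^ m)ᴴ)).re
      = (trace (A * (M ^ m * η * (M ^ m)ᴴ) * Aᴴ)).re := by
        simp only [conjTranspose_mul, Matrix.mul_assoc]
    _ = lam ^ m * (trace (A * η * Aᴴ)).re := by
        rw [conj_pow_eq_pow_smul h, Matrix.mul_smul, Matrix.smul_mul, trace_smul, smul_eq_mul,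
          ← Complex.ofReal_pow, Complex.re_ofReal_mul]

theorem tsum_re_trace_conj_mul_pow (h : M * η * Mᴴ = (lam : ℂ) • η)
    (hlam0 : 0 ≤ lam) (hlam1 : lam < 1) :
    ∑' m : ℕ, (trace (A * M ^ m * η * (A * M ^ m)ᴴ)).re =
      (trace (A * η * Aᴴ)).re / (1 - lam) := by
  simp_rw [re_trace_conj_mul_pow h]
  rw [tsum_mul_right, tsum_geometric_of_lt_one hlam0 hlam1, div_eq_inv_mul]

end Eigenmatrix

section FourSite

def FourSiteStep (i j : ℤ) : Prop :=
  i = 1 ∧ j = 1 ∨ i = 2 ∧ j = 1 ∨ i = 2 ∧ j = 3 ∨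
    i = 3 ∧ j = 2 ∨ i = 3 ∧ j = 4 ∨ i = 4 ∧ j = 4

theorem fourSiteStep_of_fourSiteB_ne_zero {k : ℕ} {L R : Matrix (Fin k) (Fin k) ℂ} {i j : ℤ}
    (h : fourSiteB L R i j ≠ 0) : FourSiteStep i j := by
  unfold fourSiteB at h
  unfold FourSiteStep
  split_ifs at h <;> first | omega | exact absurd rfl h

section Classification

variable {r : ℕ} {x : ℕ → ℤ}

theorem ne_one_of_fourSiteStep (hstep : ∀ n < r, FourSiteStep (x n) (x (n + 1)))
    (hlast : x r = 4) {n : ℕ} (hn : n ≤ r) : x n ≠ 1 := by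
  induction hn using Nat.decreasingInduction with
  | self => omega
  | of_succ n hn ih => have := hstep n hn; unfold FourSiteStep at this; omega

theorem eq_two_add_mod_two_of_fourSiteStep (hstep : ∀ n < r, FourSiteStep (x n) (x (n + 1)))
    (h0 : x 0 = 2) (hmid : ∀ n < r, x n ≠ 4) (hlast : x r = 4) {n : ℕ} (hn : n < r) :
    x n = 2 + (n % 2 : ℕ) := by
  induction n with
  | zero => simpa using h0
  | succ n ih =>
    have hs := hstep n (by omega)
    have h1 := ne_one_of_fourSiteStep hstep hlast (n := n + 1) (by omega)
    have h4 := hmid (n + 1) hn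
    have := ih (by omega)
    unfold FourSiteStep at hs
    omega

end Classification

def zigzag (m n : ℕ) : ℤ := if 2 * m + 2 ≤ n then 4 else 2 + (n % 2 : ℕ)

def zigzagPath (m : ℕ) : FPPath {4} 2 where
  r := 2 * m + 2
  x := zigzag m
  hr := by omega
  hx0 := by simp [zigzag]
  hmid n hn := by simp only [zigzag, if_neg (not_le.2 hn), Set.mem_singleton_iff]; omega
  hlast := by simp [zigzag]
  htail n hn := by simp [zigzag, hn]

theorem zigzagPath_injective : Function.Injective zigzagPath := fun a b h => by
  have := congrArg FPPath.r h
  simp only [zigzagPath] at this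
  omega

theorem eq_zigzagPath {p : FPPath {4} 2}
    (hstep : ∀ n < p.r, FourSiteStep (p.x n) (p.x (n + 1))) : ∃ m, p = zigzagPath m := by
  obtain ⟨r, x, hr, hx0, hmid, hlast, htail⟩ := p
  simp only [Set.mem_singleton_iff] at hstep hmid hlast
  have halt : ∀ n < r, x n = 2 + (n % 2 : ℕ) :=
    fun n hn => eq_two_add_mod_two_of_fourSiteStep hstep hx0 hmid hlast hn
  obtain ⟨m, rfl⟩ : ∃ m, r = 2 * m + 2 := by
    have hs := hstep (r - 1) (by omega)
    have := halt (r - 1) (by omega)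
    rw [Nat.sub_add_cancel hr, hlast] at hs
    unfold FourSiteStep at hs
    exact ⟨r / 2 - 1, by omega⟩
  obtain rfl : x = zigzag m := funext fun n => by
    by_cases hn : n < 2 * m + 2
    · rw [halt n hn, zigzag, if_neg (by omega)]
    · rw [htail n (by omega), hlast, zigzag, if_pos (by omega)]
  exact ⟨m, rfl⟩

variable {k : ℕ} (L R : Matrix (Fin k) (Fin k) ℂ)

theorem pathProd_zigzag (m : ℕ) :
    pathProd (fourSiteB L R) (zigzag m) (2 * m + 2) = R ^ 2 * (L * R) ^ m := by
  induction m with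
  | zero => simp [pathProd, zigzag, fourSiteB, sq]
  | succ m ih =>
    have hshift : (fun n => zigzag (m + 1) (n + 2)) = zigzag m := by
      funext n
      simp only [zigzag]
      split_ifs <;> omega
    rw [show 2 * (m + 1) + 2 = 2 * m + 2 + 2 by omega, pathProd_add, hshift, ih, pow_succ,
      Matrix.mul_assoc]
    congr 2
    simp [pathProd, zigzag, fourSiteB]

theorem pathOp_zigzagPath (m : ℕ) :
    pathOp (fourSiteB L R) (zigzagPath m) = R ^ 2 * (L * R) ^ m :=
  (pathOp_eq_pathProd _ _).trans (pathProd_zigzag L R m)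

theorem support_subset_range_zigzagPath (η : Matrix (Fin k) (Fin k) ℂ) :
    Function.support (fun p : FPPath {4} 2 =>
      (trace (pathOp (fourSiteB L R) p * η * (pathOp (fourSiteB L R) p)ᴴ)).re) ⊆
      Set.range zigzagPath := by
  intro p hp
  by_cases hstep : ∀ n < p.r, FourSiteStep (p.x n) (p.x (n + 1))
  · obtain ⟨m, rfl⟩ := eq_zigzagPath hstep
    exact ⟨m, rfl⟩
  · push Not at hstep
    obtain ⟨j, hj, hnot⟩ := hstep
    have hB : fourSiteB L R (p.x j) (p.x (j + 1)) = 0 :=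
      not_not.1 (mt fourSiteStep_of_fourSiteB_ne_zero hnot)
    refine absurd ?_ hp
    simp [pathOp_eq_pathProd, pathProd_eq_zero _ hj hB]

end FourSite

theorem four_site_hitting_probability_general (k : ℕ)
    (L R : Matrix (Fin k) (Fin k) ℂ)
    (η : Matrix (Fin k) (Fin k) ℂ)
    (lam : ℝ) (hlam0 : 0 ≤ lam) (hlam1 : lam < 1)
    (heig : (L * R) * η * (L * R)ᴴ = ((lam : ℝ) : ℂ) • η) :
    hitProb (fourSiteB L R) {4} 2 η =
      (Matrix.trace (R ^ 2 * η * (R ^ 2)ᴴ)).re / (1 - lam) ∧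
    ∑' m : ℕ,
        (Matrix.trace ((R ^ 2 * (L * R) ^ m) * η * (R ^ 2 * (L * R) ^ m)ᴴ)).re =
      (Matrix.trace (R ^ 2 * η * (R ^ 2)ᴴ)).re / (1 - lam) := by
  have hseries := tsum_re_trace_conj_mul_pow (A := R ^ 2) heig hlam0 hlam1
  refine ⟨?_, hseries⟩
  rw [hitProb, if_neg (by norm_num), ← hseries,
    ← zigzagPath_injective.tsum_eq (support_subset_range_zigzagPath L R η)]
  simp only [pathOp_zigzagPath]

/-- for the four-site OQRW determined by L, R with L*L + R*R = I, and
a density matrix η with (LR) η (LR)* = λ η, 0 ≤ λ < 1, the hitting probability of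
site 4 from site 2 with internal state η is tr(R² η (R²)*)/(1 − λ); explicitly the
first-passage path operators are R²(LR)^m, m ≥ 0, and the corresponding series sums
to tr(R² η (R²)*)/(1 − λ). -/
theorem four_site_hitting_probability (k : ℕ) (hk : 1 ≤ k)
    (L R : Matrix (Fin k) (Fin k) ℂ)
    (hunit : Lᴴ * L + Rᴴ * R = 1)
    (η : Matrix (Fin k) (Fin k) ℂ) (hη : η.PosSemidef) (htr : Matrix.trace η = 1)
    (lam : ℝ) (hlam0 : 0 ≤ lam) (hlam1 : lam < 1)
    (heig : (L * R) * η * (L * R)ᴴ = ((lam : ℝ) : ℂ) • η) :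
    hitProb (fourSiteB L R) {4} 2 η =
      (Matrix.trace (R ^ 2 * η * (R ^ 2)ᴴ)).re / (1 - lam) ∧
    ∑' m : ℕ,
        (Matrix.trace ((R ^ 2 * (L * R) ^ m) * η * (R ^ 2 * (L * R) ^ m)ᴴ)).re =
      (Matrix.trace (R ^ 2 * η * (R ^ 2)ᴴ)).re / (1 - lam) :=
  four_site_hitting_probability_general k L R η lam hlam0 hlam1 heig
end
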